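/- arXiv:2408.07073 — 11 statements merged into one kernel-verified Lean document; each statement's English description precedes it below -/
import Mathlib

section
/- Let R be a ring, σ an endomorphism of R, δ a σ-derivation, and M a completely (σ,δ)-compatible right R-module. If N is a submodule of M and mrr' ∈ N for m ∈ M and r, r' ∈ R, then mδ^j(r)r' ∈ N and mrδ^j(r') ∈ N for all natural numbers j. -/
open MulOpposite

/-- A right `R`-module (module over `Rᵐᵒᵖ`) is `σ`-compatible if `m·r = 0 ↔ m·σ(r) = 0`. -/
def SigmaCompatible (R : Type*) [Ring R] (M : Type*) [AddCommGroup M] [Module Rᵐᵒᵖ M]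
    (σ : R → R) : Prop :=
  ∀ (m : M) (r : R), op r • m = 0 ↔ op (σ r) • m = 0

/-- A right `R`-module is `δ`-compatible if `m·r = 0 → m·δ(r) = 0`. -/
def DeltaCompatible (R : Type*) [Ring R] (M : Type*) [AddCommGroup M] [Module Rᵐᵒᵖ M]
    (δ : R → R) : Prop :=
  ∀ (m : M) (r : R), op r • m = 0 → op (δ r) • m = 0

/-- `M` is completely `(σ,δ)`-compatible if every quotient `M/N` is `σ`- and `δ`-compatible. -/
def CompletelyCompatible (R : Type*) [Ring R] (M : Type*) [AddCommGroup M] [Module Rᵐᵒᵖ M]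
    (σ δ : R → R) : Prop :=
  ∀ N : Submodule Rᵐᵒᵖ M,
    SigmaCompatible R (M ⧸ N) σ ∧ DeltaCompatible R (M ⧸ N) δ


lemma key_step (R : Type*) [Ring R] (M : Type*) [AddCommGroup M] [Module Rᵐᵒᵖ M]
    (σ : R →+* R) (δ : R → R)
    (hδmul : ∀ r s : R, δ (r * s) = σ r * δ s + δ r * s)
    (hσ : SigmaCompatible R M (⇑σ)) (hδ : DeltaCompatible R M δ)
    (x : M) (r r' : R) (h : op (r * r') • x = 0) :
    op (δ r * r') • x = 0 ∧ op (r * δ r') • x = 0 := by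
  have hsplit : ∀ a b : R, op (a * b) • x = op b • (op a • x) := by
    intro a b; rw [smul_smul, ← op_mul]
  constructor
  · -- x·σ(r r') = 0
    have h1 : op (σ (r * r')) • x = 0 := (hσ x _).mp h
    rw [map_mul, hsplit] at h1
    -- y := op (σ r) • x satisfies y·σ(r') = 0, hence y·r' = 0, hence y·δ(r') = 0
    have h2 : op r' • (op (σ r) • x) = 0 := (hσ (op (σ r) • x) r').mpr h1
    have h3 : op (δ r') • (op (σ r) • x) = 0 := hδ _ _ h2
    rw [← hsplit] at h3
    -- x·δ(r r') = 0
    have h4 : op (δ (r * r')) • x = 0 := hδ x _ h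
    rw [hδmul, op_add, add_smul, h3, zero_add] at h4
    exact h4
  · have h2 : op r' • (op r • x) = 0 := by rw [← hsplit]; exact h
    have h3 : op (δ r') • (op r • x) = 0 := hδ _ _ h2
    rw [← hsplit] at h3
    exact h3

theorem stmt1 (R : Type*) [Ring R] (M : Type*) [AddCommGroup M] [Module Rᵐᵒᵖ M]
    (σ : R →+* R) (δ : R → R)
    (hδadd : ∀ r s : R, δ (r + s) = δ r + δ s)
    (hδmul : ∀ r s : R, δ (r * s) = σ r * δ s + δ r * s)
    (hM : CompletelyCompatible R M (⇑σ) δ)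
    (N : Submodule Rᵐᵒᵖ M) (m : M) (r r' : R) (h : op (r * r') • m ∈ N) :
    (∀ j : ℕ, op (δ^[j] r * r') • m ∈ N) ∧ (∀ j : ℕ, op (r * δ^[j] r') • m ∈ N) := by
  obtain ⟨hσ, hδ⟩ := hM N
  have hmem : ∀ s : R, op s • m ∈ N ↔
      op s • (Submodule.Quotient.mk m : M ⧸ N) = 0 := by
    intro s
    rw [← Submodule.Quotient.mk_smul, Submodule.Quotient.mk_eq_zero]
  have h0 : op (r * r') • (Submodule.Quotient.mk m : M ⧸ N) = 0 := (hmem _).mp h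
  constructor
  · intro j
    rw [hmem]
    induction j with
    | zero => exact h0
    | succ n ih =>
      rw [Function.iterate_succ_apply']
      exact (key_step R (M ⧸ N) σ δ hδmul hσ hδ _ _ _ ih).1
  · intro j
    rw [hmem]
    induction j with
    | zero => exact h0
    | succ n ih =>
      rw [Function.iterate_succ_apply']
      exact (key_step R (M ⧸ N) σ δ hδmul hσ hδ _ _ _ ih).2
end

section
/- Let R be a ring, σ a ring automorphism of R, and δ a σ-derivation of R. Define σ' := σ⁻¹ and δ' := -δ∘σ⁻¹. If M is a completely (σ,δ)-compatible right R-module, then M is completely (σ',δ')-compatible. -/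
open MulOpposite

theorem stmt4 (R : Type*) [Ring R] (M : Type*) [AddCommGroup M] [Module Rᵐᵒᵖ M]
    (σ : R ≃+* R) (δ : R → R)
    (hδadd : ∀ r s : R, δ (r + s) = δ r + δ s)
    (hδmul : ∀ r s : R, δ (r * s) = σ r * δ s + δ r * s)
    (hM : CompletelyCompatible R M (⇑σ) δ) :
    CompletelyCompatible R M (⇑σ.symm) (fun r => -δ (σ.symm r)) := by
  intro N
  obtain ⟨hσ, hδ⟩ := hM N
  constructor
  · intro m r
    have := hσ m (σ.symm r)
    simpa using this.symm
  · intro m r hr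
    have h1 : op (σ.symm r) • m = 0 := by
      have := hσ m (σ.symm r)
      simpa using this.mpr (by simpa using hr)
    have h2 := hδ m (σ.symm r) h1
    simp only [op_neg, neg_smul, neg_eq_zero]
    exact h2
end

section
/- Let A := R(x;σ,δ) be the skew Ore polynomial ring over a ring R with σ an automorphism of R and δ a locally nilpotent σ-derivation, subject to xr = σ(r)x + xδ(r)x. Then the multiplicative set X = {x^k : k ≥ 0} is a left Ore set in A, i.e., for all a ∈ A and k ∈ ℕ, Xa ∩ Ax^k ≠ ∅. -/
open MulOpposite Finsupp

/-- The skew Ore polynomial ring `A = R(x;σ,δ)` of Higuera–Reyes: `σ` is an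
automorphism of `R`, `δ` a locally nilpotent `σ`-derivation, `A` is a free left
`R`-module with basis `{xᵏ}` and commutation rule
`x·r = σ(r)x + σδ(r)x² + ⋯ + σδ^{n(r)-1}(r)x^{n(r)}` (i.e. `xr = σ(r)x + xδ(r)x`). -/
structure SkewOreRing (R A : Type*) [Ring R] [Ring A] (σ : R ≃+* R) (δ : R → R) where
  φ : R →+* A
  x : A
  deriv_add : ∀ r s : R, δ (r + s) = δ r + δ s
  deriv_mul : ∀ r s : R, δ (r * s) = σ r * δ s + δ r * s
  locNilp : ∀ r : R, ∃ n : ℕ, 1 ≤ n ∧ δ^[n] r = 0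
  basis : Function.Bijective
    (fun f : ℕ →₀ R => f.sum fun k r => φ r * x ^ k)
  comm : ∀ (r : R) (n : ℕ), δ^[n] r = 0 →
    x * φ r = ∑ i ∈ Finset.range n, φ (σ (δ^[i] r)) * x ^ (i + 1)

/-- `fWord σ' δ' k i` is the sum of all words in `σ'`, `δ'` with `k` letters,
`i` of which are `σ'` (the maps `f_k^i` governing `x^{-k}·r = Σ f_k^i(r)x^{-i}`). -/
def fWord {R : Type*} [Ring R] (σ' δ' : R → R) : ℕ → ℕ → R → R
  | 0, 0 => id
  | 0, _ + 1 => 0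
  | k + 1, 0 => fun r => δ' (fWord σ' δ' k 0 r)
  | k + 1, i + 1 => fun r => σ' (fWord σ' δ' k i r) + δ' (fWord σ' δ' k (i + 1) r)

/-- The inverse polynomial module `M[x⁻¹]`, realized on `ℕ →₀ M` (`single k m`
is `m·x^{-k}`), as a right `A`-module: the action satisfies
`m x^{-k}·x = m x^{-(k-1)}` (and `0` for `k = 0`) and
`m x^{-k}·r = Σ_{i≤k} m f_k^i(r) x^{-i}` where the `f_k^i` are built from
`σ' = σ⁻¹` and `δ' = -δσ⁻¹`. -/
structure IsInvPolyModule {R A : Type*} [Ring R] [Ring A] {σ : R ≃+* R} {δ : R → R}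
    (S : SkewOreRing R A σ δ) (M : Type*) [AddCommGroup M] [Module Rᵐᵒᵖ M]
    [Module Aᵐᵒᵖ (ℕ →₀ M)] : Prop where
  smul_x_succ : ∀ (k : ℕ) (m : M),
    op S.x • (single (k + 1) m : ℕ →₀ M) = single k m
  smul_x_zero : ∀ m : M, op S.x • (single 0 m : ℕ →₀ M) = 0
  smul_coeff : ∀ (k : ℕ) (m : M) (r : R),
    op (S.φ r) • (single k m : ℕ →₀ M) =
      ∑ i ∈ Finset.range (k + 1),
        single i (op (fWord (⇑σ.symm) (fun t => -δ (σ.symm t)) k i r) • m)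

/-- `N` is a small (superfluous) submodule. -/
def IsSmallSub (S : Type*) [Ring S] (Mod : Type*) [AddCommGroup Mod] [Module S Mod]
    (N : Submodule S Mod) : Prop :=
  ∀ L : Submodule S Mod, N ⊔ L = ⊤ → L = ⊤

/-- A hollow module: every proper submodule is small. -/
def IsHollowMod (S : Type*) [Ring S] (Mod : Type*) [AddCommGroup Mod] [Module S Mod] : Prop :=
  ∀ N : Submodule S Mod, N ≠ ⊤ → IsSmallSub S Mod N

/-- A Bass module: every proper submodule is contained in a maximal submodule. -/
def IsBassMod (S : Type*) [Ring S] (Mod : Type*) [AddCommGroup Mod] [Module S Mod] : Prop :=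
  ∀ N : Submodule S Mod, N ≠ ⊤ → ∃ Q : Submodule S Mod, IsCoatom Q ∧ N ≤ Q

/-- An essential submodule: it meets `m·S` nontrivially for every nonzero `m`. -/
def EssentialIn (S : Type*) [Ring S] (Mod : Type*) [AddCommGroup Mod] [Module S Mod]
    (E : Submodule S Mod) : Prop :=
  ∀ m : Mod, m ≠ 0 → ∃ s : S, s • m ∈ E ∧ s • m ≠ 0

/-- A uniform submodule: any two nonzero submodules contained in it intersect
nontrivially. -/
def UniformSub (S : Type*) [Ring S] (Mod : Type*) [AddCommGroup Mod] [Module S Mod]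
    (U : Submodule S Mod) : Prop :=
  ∀ P Q : Submodule S Mod, P ≤ U → Q ≤ U → P ≠ ⊥ → Q ≠ ⊥ → P ⊓ Q ≠ ⊥

/-- `Mod` has uniform dimension `n`: there are `n` nonzero uniform submodules
whose (independent) direct sum is essential in `Mod`. -/
def HasUdim (S : Type*) [Ring S] (Mod : Type*) [AddCommGroup Mod] [Module S Mod]
    (n : ℕ) : Prop :=
  ∃ U : Fin n → Submodule S Mod, (∀ i, U i ≠ ⊥) ∧ (∀ i, UniformSub S Mod (U i)) ∧
    iSupIndep U ∧ EssentialIn S Mod (⨆ i, U i)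

/-- The couniform dimension (corank) of a module: the supremum of `k` such that
`Mod` surjects onto a direct sum of `k` nonzero modules (equivalently, onto
`⊕ᵢ Mod⧸Lᵢ` with all `Lᵢ` proper). -/
noncomputable def corank (S : Type*) [Ring S] (Mod : Type*) [AddCommGroup Mod]
    [Module S Mod] : ℕ∞ :=
  sSup {c : ℕ∞ | ∃ k : ℕ, c = (k : ℕ∞) ∧ ∃ L : Fin k → Submodule S Mod,
    (∀ i, L i ≠ ⊤) ∧
    Function.Surjective (LinearMap.pi (fun i => (L i).mkQ) : Mod →ₗ[S] ∀ i, Mod ⧸ L i)}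

/-- The `R`-module structure on `M[x⁻¹]` obtained by restricting the `A`-action
along `φ : R →+* A`; with respect to it, "`M[x⁻¹]` is a Bass right `R`-module". -/
def IsBassR {R A : Type*} [Ring R] [Ring A] {σ : R ≃+* R} {δ : R → R}
    (S : SkewOreRing R A σ δ) (M : Type*) [AddCommGroup M]
    [Module Aᵐᵒᵖ (ℕ →₀ M)] : Prop :=
  letI : Module Rᵐᵒᵖ (ℕ →₀ M) := Module.compHom _ (RingHom.op S.φ)
  IsBassMod Rᵐᵒᵖ (ℕ →₀ M)

lemma skew_step {R A : Type*} [Ring R] [Ring A] {σ : R ≃+* R} {δ : R → R}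
    (S : SkewOreRing R A σ δ) (r : R) (m : ℕ) :
    ∃ b : A, S.x * (S.φ r * S.x ^ m) = b * S.x := by
  obtain ⟨n, -, hn⟩ := S.locNilp r
  refine ⟨∑ i ∈ Finset.range n, S.φ (σ (δ^[i] r)) * S.x ^ (i + m), ?_⟩
  rw [← mul_assoc, S.comm r n hn, Finset.sum_mul, Finset.sum_mul]
  refine Finset.sum_congr rfl fun i _ => ?_
  rw [mul_assoc, mul_assoc, ← pow_succ, ← pow_add]
  ring_nf

lemma skew_one {R A : Type*} [Ring R] [Ring A] {σ : R ≃+* R} {δ : R → R}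
    (S : SkewOreRing R A σ δ) (a : A) :
    ∃ b : A, S.x * a = b * S.x := by
  obtain ⟨f, rfl⟩ := S.basis.surjective a
  simp only [Finsupp.sum]
  choose g hg using fun k => skew_step S (f k) k
  refine ⟨∑ k ∈ f.support, g k, ?_⟩
  rw [Finset.mul_sum, Finset.sum_mul]
  exact Finset.sum_congr rfl fun k _ => hg k

lemma skew_pow {R A : Type*} [Ring R] [Ring A] {σ : R ≃+* R} {δ : R → R}
    (S : SkewOreRing R A σ δ) (k : ℕ) (a : A) :
    ∃ b : A, S.x ^ k * a = b * S.x ^ k := by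
  induction k generalizing a with
  | zero => exact ⟨a, by simp⟩
  | succ k ih =>
    obtain ⟨b₁, hb₁⟩ := skew_one S a
    obtain ⟨b₂, hb₂⟩ := ih b₁
    refine ⟨b₂, ?_⟩
    rw [pow_succ, mul_assoc, hb₁, ← mul_assoc, hb₂, mul_assoc]

/-- `X = {xᵏ}` is a left Ore set in `A = R(x;σ,δ)`: `Xa ∩ Axᵏ ≠ ∅`. -/
theorem stmt5 (R A : Type*) [Ring R] [Ring A] (σ : R ≃+* R) (δ : R → R)
    (S : SkewOreRing R A σ δ) (a : A) (k : ℕ) :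
    ∃ (j : ℕ) (b : A), S.x ^ j * a = b * S.x ^ k := by
  obtain ⟨b, hb⟩ := skew_pow S k a
  exact ⟨k, b, hb⟩
end

section
/- Let A = R(x;σ,δ) be the skew Ore polynomial ring with σ an automorphism of R and δ a locally nilpotent σ-derivation, and let M be a completely (σ,δ)-compatible right R-module. If N is an essential submodule of M, then the inverse polynomial module N[x⁻¹] is an essential A-submodule of M[x⁻¹]. -/
open MulOpposite Finsupp

/-- If `M` is completely `(σ,δ)`-compatible and `N` is essential in `M`, then
`N[x⁻¹]` is an essential `A`-submodule of `M[x⁻¹]`. -/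
theorem stmt6 (R A : Type*) [Ring R] [Ring A] (σ : R ≃+* R) (δ : R → R)
    (S : SkewOreRing R A σ δ) (M : Type*) [AddCommGroup M] [Module Rᵐᵒᵖ M]
    [Module Aᵐᵒᵖ (ℕ →₀ M)] (hinv : IsInvPolyModule S M)
    (hcompat : CompletelyCompatible R M (⇑σ) δ)
    (N : Submodule Rᵐᵒᵖ M)
    (hess : ∀ m : M, m ≠ 0 → ∃ r : R, op r • m ∈ N ∧ op r • m ≠ 0) :
    ∃ NP : Submodule Aᵐᵒᵖ (ℕ →₀ M),
      (NP : Set (ℕ →₀ M)) = {p : ℕ →₀ M | ∀ i, p i ∈ N} ∧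
      EssentialIn Aᵐᵒᵖ (ℕ →₀ M) NP := by
  classical
  set C : Set (ℕ →₀ M) := {p : ℕ →₀ M | ∀ i, p i ∈ N} with hC
  have hzero : (0 : ℕ →₀ M) ∈ C := fun i => by simp [N.zero_mem]
  have hadd : ∀ p q : ℕ →₀ M, p ∈ C → q ∈ C → p + q ∈ C := fun p q hp hq i => by
    rw [Finsupp.add_apply]; exact N.add_mem (hp i) (hq i)
  have hsum : ∀ (s : Finset ℕ) (f : ℕ → (ℕ →₀ M)), (∀ j ∈ s, f j ∈ C) →
      (∑ j ∈ s, f j) ∈ C := by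
    intro s f hf
    induction s using Finset.induction with
    | empty => simpa using hzero
    | @insert a s' hnotmem ih =>
      rw [Finset.sum_insert hnotmem]
      exact hadd _ _ (hf a (Finset.mem_insert_self a s'))
        (ih fun j hj => hf j (Finset.mem_insert_of_mem hj))
  have hsingle : ∀ (k : ℕ) (m : M), m ∈ N → (single k m : ℕ →₀ M) ∈ C := by
    intro k m hm i
    rw [Finsupp.single_apply]
    split
    · exact hm
    · exact N.zero_mem
  have hdecomp : ∀ p : ℕ →₀ M, p = ∑ k ∈ p.support, single k (p k) := by
    intro p
    exact (Finsupp.sum_single p).symm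
  have hx : ∀ p ∈ C, op S.x • p ∈ C := by
    intro p hp
    rw [hdecomp p, Finset.smul_sum]
    refine hsum _ _ fun j hj => ?_
    cases j with
    | zero => rw [hinv.smul_x_zero]; exact hzero
    | succ k => rw [hinv.smul_x_succ]; exact hsingle _ _ (hp _)
  have hxpow : ∀ (k : ℕ) (p : ℕ →₀ M), p ∈ C → (op S.x) ^ k • p ∈ C := by
    intro k
    induction k with
    | zero => intro p hp; simpa using hp
    | succ k ih =>
      intro p hp
      rw [pow_succ, mul_smul]
      exact ih _ (hx p hp)
  have hphi : ∀ (r : R) (p : ℕ →₀ M), p ∈ C → op (S.φ r) • p ∈ C := by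
    intro r p hp
    rw [hdecomp p, Finset.smul_sum]
    refine hsum _ _ fun j hj => ?_
    rw [hinv.smul_coeff]
    exact hsum _ _ fun i hi => hsingle _ _ (N.smul_mem _ (hp j))
  have hA : ∀ (a : Aᵐᵒᵖ) (p : ℕ →₀ M), p ∈ C → a • p ∈ C := by
    intro a p hp
    obtain ⟨f, hf⟩ := S.basis.2 (unop a)
    have ha : a = ∑ k ∈ f.support, (op S.x) ^ k * op (S.φ (f k)) := by
      rw [← op_unop a, ← hf]
      simp only [Finsupp.sum]
      rw [Finset.op_sum]
      refine Finset.sum_congr rfl fun k _ => ?_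
      rw [op_mul, op_pow]
    rw [ha, Finset.sum_smul]
    refine hsum _ _ fun j hj => ?_
    rw [mul_smul]
    exact hxpow _ _ (hphi _ _ hp)
  refine ⟨{ carrier := C
            add_mem' := fun {p q} hp hq => hadd p q hp hq
            zero_mem' := hzero
            smul_mem' := fun a p hp => hA a p hp }, rfl, ?_⟩
  intro p hp
  have hsupp : p.support.Nonempty := Finsupp.support_nonempty_iff.2 hp
  set d := p.support.max' hsupp with hd
  have hpd : p d ≠ 0 := Finsupp.mem_support_iff.1 (p.support.max'_mem hsupp)
  obtain ⟨r, hrN, hrne⟩ := hess (p d) hpd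
  -- x-power action on singles
  have hxp : ∀ (j k : ℕ) (m : M), (op S.x) ^ j • (single k m : ℕ →₀ M) =
      if j ≤ k then single (k - j) m else 0 := by
    intro j
    induction j with
    | zero => intro k m; simp
    | succ j ih =>
      intro k m
      rw [pow_succ, mul_smul]
      cases k with
      | zero => rw [hinv.smul_x_zero, smul_zero]; simp
      | succ k =>
        rw [hinv.smul_x_succ, ih]
        by_cases h : j ≤ k
        · rw [if_pos h, if_pos (Nat.succ_le_succ h), Nat.succ_sub_succ]
        · rw [if_neg h, if_neg (fun hc => h (Nat.le_of_succ_le_succ hc))]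
  have hxd : (op S.x) ^ d • p = single 0 (p d) := by
    conv_lhs => rw [hdecomp p]
    rw [Finset.smul_sum]
    rw [Finset.sum_eq_single d]
    · rw [hxp, if_pos le_rfl, Nat.sub_self]
    · intro k hk hkd
      rw [hxp, if_neg]
      intro hle
      exact hkd (le_antisymm (p.support.le_max' k hk) hle)
    · intro hdn
      exact absurd (p.support.max'_mem hsupp) hdn
  refine ⟨op (S.φ r) * (op S.x) ^ d, ?_, ?_⟩
  · rw [mul_smul, hxd, hinv.smul_coeff]
    show _ ∈ C
    refine hsum _ _ fun i hi => ?_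
    obtain rfl : i = 0 := Nat.lt_one_iff.1 (Finset.mem_range.1 hi)
    exact hsingle _ _ (by exact hrN)
  · rw [mul_smul, hxd, hinv.smul_coeff]
    rw [Finset.sum_range_one]
    intro hcontra
    apply hrne
    have h2 := Finsupp.single_eq_zero.1 hcontra
    exact h2
end

section
/- Let A = R(x;σ,δ) be the skew Ore polynomial ring with σ an automorphism and δ a locally nilpotent σ-derivation. If N is a uniform submodule of a right R-module M, then N[x⁻¹] is a uniform A-submodule of M[x⁻¹]. -/
open MulOpposite Finsupp

section Aux

variable {R A : Type*} [Ring R] [Ring A] {σ : R ≃+* R} {δ : R → R}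
  {S : SkewOreRing R A σ δ} {M : Type*} [AddCommGroup M] [Module Rᵐᵒᵖ M]
  [Module Aᵐᵒᵖ (ℕ →₀ M)]
  (N : Submodule Rᵐᵒᵖ M)

lemma aux_single_mem (k : ℕ) (m : M) (hm : m ∈ N) (i : ℕ) :
    (single k m : ℕ →₀ M) i ∈ N := by
  rw [Finsupp.single_apply]
  split <;> simp [hm]

lemma aux_smul_pieces {a : Aᵐᵒᵖ}
    (ha : ∀ (k : ℕ) (m : M), m ∈ N → ∀ i, (a • (single k m : ℕ →₀ M)) i ∈ N)
    (p : ℕ →₀ M) (hp : ∀ i, p i ∈ N) (i : ℕ) : (a • p) i ∈ N := by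
  have h : a • p = ∑ j ∈ p.support, a • single j (p j) := by
    rw [← Finset.smul_sum]
    congr 1
    exact (Finsupp.sum_single p).symm
  rw [h, Finsupp.finset_sum_apply]
  exact Submodule.sum_mem _ fun j _ => ha j (p j) (hp j) i

lemma aux_x_closed (hinv : IsInvPolyModule S M) (p : ℕ →₀ M) (hp : ∀ i, p i ∈ N) (i : ℕ) :
    (op S.x • p) i ∈ N := by
  refine aux_smul_pieces N (fun k m hm i => ?_) p hp i
  cases k with
  | zero => rw [hinv.smul_x_zero]; simp
  | succ k => rw [hinv.smul_x_succ]; exact aux_single_mem N k m hm i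

lemma aux_phi_closed (hinv : IsInvPolyModule S M) (r : R) (p : ℕ →₀ M) (hp : ∀ i, p i ∈ N) (i : ℕ) :
    (op (S.φ r) • p) i ∈ N := by
  refine aux_smul_pieces N (fun k m hm i => ?_) p hp i
  rw [hinv.smul_coeff, Finsupp.finset_sum_apply]
  exact Submodule.sum_mem _ fun j _ =>
    aux_single_mem N j _ (N.smul_mem _ hm) i

lemma aux_xpow_closed (hinv : IsInvPolyModule S M) (k : ℕ) (p : ℕ →₀ M) (hp : ∀ i, p i ∈ N) (i : ℕ) :
    (op (S.x ^ k) • p) i ∈ N := by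
  induction k generalizing p i with
  | zero => simpa using hp i
  | succ k ih =>
      have : op (S.x ^ (k + 1)) • p = op S.x • (op (S.x ^ k) • p) := by
        rw [← mul_smul, ← op_mul, pow_succ]
      rw [this]
      exact aux_x_closed N hinv _ (fun j => ih p hp j) i

lemma aux_a_closed (hinv : IsInvPolyModule S M) (a : A) (p : ℕ →₀ M) (hp : ∀ i, p i ∈ N) (i : ℕ) :
    (op a • p) i ∈ N := by
  obtain ⟨f, hf⟩ := S.basis.surjective a
  rw [← hf]
  have h1 : (fun f : ℕ →₀ R => f.sum fun k r => S.φ r * S.x ^ k) f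
      = ∑ k ∈ f.support, S.φ (f k) * S.x ^ k := rfl
  rw [h1, Finset.op_sum, Finset.sum_smul, Finsupp.finset_sum_apply]
  refine Submodule.sum_mem _ fun k _ => ?_
  rw [op_mul, mul_smul]
  exact aux_xpow_closed N hinv k _ (fun j => aux_phi_closed N hinv _ p hp j) i

/-- `N[x⁻¹]` as an `Aᵐᵒᵖ`-submodule. -/
def auxNP (hinv : IsInvPolyModule S M) : Submodule Aᵐᵒᵖ (ℕ →₀ M) where
  carrier := {p : ℕ →₀ M | ∀ i, p i ∈ N}
  add_mem' := fun hp hq i => by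
    rw [Finsupp.add_apply]; exact N.add_mem (hp i) (hq i)
  zero_mem' := fun i => by simp
  smul_mem' := fun a p hp i => by
    have := aux_a_closed N hinv a.unop p hp i
    rwa [op_unop] at this

lemma aux_x_shift (hinv : IsInvPolyModule S M) (p : ℕ →₀ M) (i : ℕ) : (op S.x • p) i = p (i + 1) := by
  have h : op S.x • p = ∑ j ∈ p.support, op S.x • single j (p j) := by
    rw [← Finset.smul_sum]
    congr 1
    exact (Finsupp.sum_single p).symm
  rw [h, Finsupp.finset_sum_apply]
  rw [Finset.sum_eq_single (i + 1)]
  · rw [hinv.smul_x_succ, Finsupp.single_eq_same]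
  · intro j hj hji
    cases j with
    | zero => rw [hinv.smul_x_zero]; rfl
    | succ j =>
        rw [hinv.smul_x_succ, Finsupp.single_apply, if_neg]
        omega
  · intro h
    rw [Finsupp.notMem_support_iff.mp h, Finsupp.single_zero, smul_zero]
    rfl

lemma aux_xpow_shift (hinv : IsInvPolyModule S M) (k : ℕ) (p : ℕ →₀ M) (i : ℕ) :
    (op (S.x ^ k) • p) i = p (i + k) := by
  induction k generalizing p i with
  | zero => simp
  | succ k ih =>
      have : op (S.x ^ (k + 1)) • p = op S.x • (op (S.x ^ k) • p) := by
        rw [← mul_smul, ← op_mul, pow_succ]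
      rw [this, aux_x_shift hinv, ih]
      ring_nf

/-- The degree-zero part of an `Aᵐᵒᵖ`-submodule of `M[x⁻¹]`, as an
`Rᵐᵒᵖ`-submodule of `M`. -/
def auxDeg0 (hinv : IsInvPolyModule S M) (P : Submodule Aᵐᵒᵖ (ℕ →₀ M)) : Submodule Rᵐᵒᵖ M where
  carrier := {m : M | (single 0 m : ℕ →₀ M) ∈ P}
  add_mem' := fun {a b} ha hb => by
    show (single 0 (a + b) : ℕ →₀ M) ∈ P
    rw [Finsupp.single_add]
    exact P.add_mem ha hb
  zero_mem' := by
    show (single 0 (0 : M) : ℕ →₀ M) ∈ P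
    rw [Finsupp.single_zero]
    exact P.zero_mem
  smul_mem' := fun r m hm => by
    show (single 0 (r • m) : ℕ →₀ M) ∈ P
    have h := hinv.smul_coeff 0 m r.unop
    rw [Finset.sum_range_one] at h
    have h2 : fWord (⇑σ.symm) (fun t => -δ (σ.symm t)) 0 0 r.unop = r.unop := rfl
    rw [h2, op_unop] at h
    rw [← h]
    exact P.smul_mem _ hm

lemma aux_reduce (hinv : IsInvPolyModule S M) (P : Submodule Aᵐᵒᵖ (ℕ →₀ M)) (p : ℕ →₀ M) (hpP : p ∈ P)
    (hp0 : p ≠ 0) : ∃ m : M, m ≠ 0 ∧ (single 0 m : ℕ →₀ M) ∈ P := by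
  have hne : p.support.Nonempty := Finsupp.support_nonempty_iff.mpr hp0
  set k := p.support.max' hne with hk
  refine ⟨p k, Finsupp.mem_support_iff.mp (p.support.max'_mem hne), ?_⟩
  have hq : (single 0 (p k) : ℕ →₀ M) = op (S.x ^ k) • p := by
    ext i
    rw [aux_xpow_shift hinv]
    cases i with
    | zero => simp
    | succ j =>
        rw [Finsupp.single_apply, if_neg (by omega)]
        refine (Finsupp.notMem_support_iff.mp ?_).symm
        intro hmem
        have := p.support.le_max' _ hmem
        omega
  rw [hq]
  exact P.smul_mem _ hpP

end Aux

/-- If `N` is a uniform submodule of `M`, then `N[x⁻¹]` is a uniform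
`A`-submodule of `M[x⁻¹]`. -/
theorem stmt7 (R A : Type*) [Ring R] [Ring A] (σ : R ≃+* R) (δ : R → R)
    (S : SkewOreRing R A σ δ) (M : Type*) [AddCommGroup M] [Module Rᵐᵒᵖ M]
    [Module Aᵐᵒᵖ (ℕ →₀ M)] (hinv : IsInvPolyModule S M)
    (N : Submodule Rᵐᵒᵖ M) (hN : UniformSub Rᵐᵒᵖ M N) :
    ∃ NP : Submodule Aᵐᵒᵖ (ℕ →₀ M),
      (NP : Set (ℕ →₀ M)) = {p : ℕ →₀ M | ∀ i, p i ∈ N} ∧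
      UniformSub Aᵐᵒᵖ (ℕ →₀ M) NP := by
  refine ⟨auxNP N hinv, rfl, ?_⟩
  intro P Q hP hQ hPne hQne
  obtain ⟨p, hpP, hp0⟩ := (Submodule.ne_bot_iff P).mp hPne
  obtain ⟨q, hqQ, hq0⟩ := (Submodule.ne_bot_iff Q).mp hQne
  obtain ⟨mp, hmp0, hmpP⟩ := aux_reduce hinv P p hpP hp0
  obtain ⟨mq, hmq0, hmqQ⟩ := aux_reduce hinv Q q hqQ hq0
  have hle : ∀ T : Submodule Aᵐᵒᵖ (ℕ →₀ M), T ≤ auxNP N hinv →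
      auxDeg0 hinv T ≤ N := by
    intro T hT m hm
    have h2 : (single 0 m : ℕ →₀ M) ∈ auxNP N hinv := hT hm
    have h3 := h2 0
    rwa [Finsupp.single_eq_same] at h3
  have hP0 : auxDeg0 hinv P ≠ ⊥ :=
    (Submodule.ne_bot_iff _).mpr ⟨mp, hmpP, hmp0⟩
  have hQ0 : auxDeg0 hinv Q ≠ ⊥ :=
    (Submodule.ne_bot_iff _).mpr ⟨mq, hmqQ, hmq0⟩
  have hinter := hN (auxDeg0 hinv P) (auxDeg0 hinv Q) (hle P hP) (hle Q hQ) hP0 hQ0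
  obtain ⟨m, hmmem, hm0⟩ := (Submodule.ne_bot_iff _).mp hinter
  refine (Submodule.ne_bot_iff _).mpr ⟨single 0 m, ?_, ?_⟩
  · exact Submodule.mem_inf.mpr ⟨(Submodule.mem_inf.mp hmmem).1,
      (Submodule.mem_inf.mp hmmem).2⟩
  · exact fun h => hm0 (Finsupp.single_eq_zero.mp h)
end

section
/- Let A = R(x;σ,δ) be the skew Ore polynomial ring with σ an automorphism of R and δ a locally nilpotent σ-derivation, and let M be a completely (σ,δ)-compatible right R-module. Then the right uniform dimension of the inverse polynomial module M[x⁻¹] as an A-module equals the right uniform dimension of M as an R-module (with both possibly infinite). -/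
open MulOpposite Finsupp

section EssLemmas

variable {S : Type*} [Ring S] {Mod : Type*} [AddCommGroup Mod] [Module S Mod]

/-- Relative essentiality of submodules. -/
def EssIn (E K : Submodule S Mod) : Prop :=
  E ≤ K ∧ ∀ X : Submodule S Mod, X ≤ K → X ≠ ⊥ → E ⊓ X ≠ ⊥

lemma essentialIn_iff_essIn_top (E : Submodule S Mod) :
    EssentialIn S Mod E ↔ EssIn E ⊤ := by
  constructor
  · intro h
    refine ⟨le_top, fun X _ hX => ?_⟩
    obtain ⟨m, hm, hm0⟩ := (Submodule.ne_bot_iff X).1 hX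
    obtain ⟨s, h1, h2⟩ := h m hm0
    exact (Submodule.ne_bot_iff _).2 ⟨s • m, Submodule.mem_inf.2 ⟨h1, X.smul_mem s hm⟩, h2⟩
  · intro h m hm
    have hX : Submodule.span S {m} ≠ ⊥ :=
      fun hb => hm (Submodule.span_singleton_eq_bot.1 hb)
    obtain ⟨y, hy, hy0⟩ := (Submodule.ne_bot_iff _).1 (h.2 _ le_top hX)
    obtain ⟨s, rfl⟩ := Submodule.mem_span_singleton.1 (Submodule.mem_inf.1 hy).2
    exact ⟨s, (Submodule.mem_inf.1 hy).1, hy0⟩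

lemma EssIn.trans {E F G : Submodule S Mod} (h1 : EssIn E F) (h2 : EssIn F G) :
    EssIn E G := by
  refine ⟨h1.1.trans h2.1, fun X hX hX0 => ?_⟩
  have h3 := h1.2 (F ⊓ X) inf_le_left (h2.2 X hX hX0)
  exact fun hb => h3 (eq_bot_mono (inf_le_inf_left E inf_le_right) hb)

lemma EssIn.sup {E B C : Submodule S Mod} (h : EssIn E B) (hBC : B ⊓ C = ⊥) :
    EssIn (E ⊔ C) (B ⊔ C) := by
  refine ⟨sup_le_sup_right h.1 C, fun X hX hX0 hcon => ?_⟩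
  have hY : (C ⊔ X) ⊓ B = ⊥ := by
    by_contra hY
    obtain ⟨e, he, he0⟩ := (Submodule.ne_bot_iff _).1 (h.2 _ inf_le_right hY)
    simp only [Submodule.mem_inf] at he
    obtain ⟨c, hc, x, hx, hcx⟩ := Submodule.mem_sup.1 he.2.1
    have heE := he.1
    have heB := he.2.2
    have hx0 : x = 0 := by
      have hxe : x = e - c := by rw [← hcx]; abel
      have hxEC : x ∈ (E ⊔ C) ⊓ X := Submodule.mem_inf.2
        ⟨hxe ▸ Submodule.sub_mem _ (Submodule.mem_sup_left heE) (Submodule.mem_sup_right hc), hx⟩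
      rw [hcon] at hxEC
      exact (Submodule.mem_bot S).1 hxEC
    have he_eq : e = c := by rw [← hcx, hx0, add_zero]
    have heBC : e ∈ B ⊓ C := Submodule.mem_inf.2 ⟨heB, he_eq ▸ hc⟩
    rw [hBC] at heBC
    exact he0 ((Submodule.mem_bot S).1 heBC)
  apply hX0
  rw [eq_bot_iff]
  intro x hx
  obtain ⟨b, hb, c, hc, hbc⟩ := Submodule.mem_sup.1 (hX hx)
  have hb0 : b = 0 := by
    have hbe : b = x - c := by rw [← hbc]; abel
    have : b ∈ (C ⊔ X) ⊓ B := Submodule.mem_inf.2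
      ⟨hbe ▸ Submodule.sub_mem _ (Submodule.mem_sup_right hx) (Submodule.mem_sup_left hc), hb⟩
    rw [hY] at this
    exact (Submodule.mem_bot S).1 this
  have hxc : x = c := by rw [← hbc, hb0, zero_add]
  have : x ∈ (E ⊔ C) ⊓ X := Submodule.mem_inf.2 ⟨hxc ▸ Submodule.mem_sup_right hc, hx⟩
  rw [hcon] at this
  simpa using this

lemma essIn_biSup {ι : Type*} {U V : ι → Submodule S Mod}
    (hUV : ∀ i, EssIn (V i) (U i)) (hind : iSupIndep U) (s : Finset ι) :
    EssIn (⨆ i ∈ s, V i) (⨆ i ∈ s, U i) := by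
  classical
  induction s using Finset.induction_on with
  | empty =>
    simp only [Finset.notMem_empty, iSup_false, iSup_bot]
    exact ⟨le_rfl, fun X hX hX0 => absurd (le_bot_iff.1 hX) hX0⟩
  | @insert a s ha ih =>
    rw [Finset.iSup_insert, Finset.iSup_insert]
    have hdisj : U a ⊓ (⨆ i ∈ s, U i) = ⊥ := by
      have h1 := _root_.disjoint_iff.1 (iSupIndep_def.1 hind a)
      refine eq_bot_mono (inf_le_inf_left _ ?_) h1
      exact iSup₂_le fun j hj => le_iSup₂_of_le j (fun h => ha (h ▸ hj)) le_rfl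
    have hVle : (⨆ i ∈ s, V i) ≤ ⨆ i ∈ s, U i :=
      iSup₂_mono fun i _ => (hUV i).1
    have h1 : EssIn (V a ⊔ ⨆ i ∈ s, V i) (U a ⊔ ⨆ i ∈ s, V i) :=
      (hUV a).sup (eq_bot_mono (inf_le_inf_left _ hVle) hdisj)
    have h2 : EssIn ((⨆ i ∈ s, V i) ⊔ U a) ((⨆ i ∈ s, U i) ⊔ U a) :=
      ih.sup (by rw [inf_comm]; exact hdisj)
    rw [sup_comm ((⨆ i ∈ s, V i)) (U a), sup_comm ((⨆ i ∈ s, U i)) (U a)] at h2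
    exact h1.trans h2

end EssLemmas

section InvPoly

variable {R A : Type*} [Ring R] [Ring A] {σ : R ≃+* R} {δ : R → R}
  {S : SkewOreRing R A σ δ} {M : Type*} [AddCommGroup M] [Module Rᵐᵒᵖ M]
  [Module Aᵐᵒᵖ (ℕ →₀ M)]

lemma smul_phi_single0 (hinv : IsInvPolyModule S M) (r : R) (m : M) :
    op (S.φ r) • (single 0 m : ℕ →₀ M) = single 0 (op r • m) := by
  rw [hinv.smul_coeff]
  simp [fWord]

lemma smul_xpow_single (hinv : IsInvPolyModule S M) (k j : ℕ) (m : M) :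
    op (S.x ^ k) • (single j m : ℕ →₀ M) =
      if k ≤ j then single (j - k) m else 0 := by
  induction k generalizing j with
  | zero => simp
  | succ k ih =>
    rw [pow_succ', op_mul, mul_smul]
    cases j with
    | zero =>
      rw [hinv.smul_x_zero, smul_zero]
      simp
    | succ j =>
      rw [hinv.smul_x_succ, ih]
      by_cases h : k ≤ j
      · simp [h, Nat.succ_le_succ h, Nat.succ_sub_succ]
      · have h' : ¬ k + 1 ≤ j + 1 := fun hh => h (Nat.le_of_succ_le_succ hh)
        simp [h, h']

lemma smul_single0 (hinv : IsInvPolyModule S M) (a : A) : ∃ r : R, ∀ m : M,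
    op a • (single 0 m : ℕ →₀ M) = single 0 (op r • m) := by
  obtain ⟨f, rfl⟩ := S.basis.2 a
  refine ⟨f 0, fun m => ?_⟩
  have hdef : (fun f : ℕ →₀ R => f.sum fun k r => S.φ r * S.x ^ k) f
      = ∑ k ∈ f.support, S.φ (f k) * S.x ^ k := rfl
  rw [hdef, show op (∑ k ∈ f.support, S.φ (f k) * S.x ^ k)
      = ∑ k ∈ f.support, op (S.φ (f k) * S.x ^ k)
      from map_sum MulOpposite.opAddEquiv _ _, Finset.sum_smul]
  have hterm : ∀ k ∈ f.support, op (S.φ (f k) * S.x ^ k) • (single 0 m : ℕ →₀ M)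
      = if k = 0 then single 0 (op (f k) • m) else 0 := by
    intro k _
    rw [op_mul, mul_smul, smul_phi_single0 hinv, smul_xpow_single hinv]
    rcases Nat.eq_zero_or_pos k with rfl | hk
    · simp
    · have : ¬ k ≤ 0 := by omega
      have : k ≠ 0 := by omega
      simp_all
  rw [Finset.sum_congr rfl hterm, Finset.sum_ite_eq']
  by_cases h0 : (0 : ℕ) ∈ f.support
  · simp [h0]
  · have hf0 : f 0 = 0 := Finsupp.notMem_support_iff.1 h0
    simp [h0, hf0]

lemma exists_xpow_smul (hinv : IsInvPolyModule S M) (p : ℕ →₀ M) (hp : p ≠ 0) :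
    ∃ (k : ℕ) (m : M), m ≠ 0 ∧ op (S.x ^ k) • p = single 0 m := by
  have hs : p.support.Nonempty := Finsupp.support_nonempty_iff.2 hp
  refine ⟨p.support.max' hs, p (p.support.max' hs),
    Finsupp.mem_support_iff.1 (p.support.max'_mem hs), ?_⟩
  set k := p.support.max' hs with hk
  have hdef : p = ∑ j ∈ p.support, single j (p j) := by
    conv_lhs => rw [← Finsupp.sum_single p]
    rfl
  conv_lhs => rw [hdef]
  rw [Finset.smul_sum]
  have hterm : ∀ j ∈ p.support, op (S.x ^ k) • (single j (p j) : ℕ →₀ M)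
      = if j = k then single 0 (p j) else 0 := by
    intro j hj
    rw [smul_xpow_single hinv]
    rcases eq_or_ne j k with rfl | hne
    · simp
    · have hle : j ≤ k := Finset.le_max' _ j hj
      have : ¬ k ≤ j := fun h => hne (le_antisymm hle h)
      simp [this, hne]
  rw [Finset.sum_congr rfl hterm, Finset.sum_ite_eq', if_pos (p.support.max'_mem hs)]

/-- The image of an `R`-submodule of `M` inside `M[x⁻¹]` in degree zero, an
`A`-submodule. -/
def lift0 (hinv : IsInvPolyModule S M) (N : Submodule Rᵐᵒᵖ M) :
    Submodule Aᵐᵒᵖ (ℕ →₀ M) where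
  carrier := {p | ∃ m ∈ N, single 0 m = p}
  add_mem' := by
    rintro p q ⟨m, hm, rfl⟩ ⟨m', hm', rfl⟩
    exact ⟨m + m', N.add_mem hm hm', Finsupp.single_add 0 m m'⟩
  zero_mem' := ⟨0, N.zero_mem, Finsupp.single_zero 0⟩
  smul_mem' := by
    rintro a p ⟨m, hm, rfl⟩
    obtain ⟨r, hr⟩ := smul_single0 hinv (unop a)
    exact ⟨op r • m, N.smul_mem _ hm, by rw [← hr m, op_unop]⟩

/-- The `R`-submodule of degree-zero coefficients belonging to an
`A`-submodule of `M[x⁻¹]`. -/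
def drop0 (hinv : IsInvPolyModule S M) (P : Submodule Aᵐᵒᵖ (ℕ →₀ M)) :
    Submodule Rᵐᵒᵖ M where
  carrier := {m | single 0 m ∈ P}
  add_mem' := by
    intro m m' hm hm'
    simp only [Set.mem_setOf_eq, Finsupp.single_add]
    exact P.add_mem hm hm'
  zero_mem' := by
    simp only [Set.mem_setOf_eq, Finsupp.single_zero]
    exact P.zero_mem
  smul_mem' := by
    intro r m hm
    show single 0 (r • m) ∈ P
    rw [← op_unop r, ← smul_phi_single0 hinv]
    exact P.smul_mem _ hm

lemma single0_mem_lift0 (hinv : IsInvPolyModule S M) {N : Submodule Rᵐᵒᵖ M} {m : M} :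
    (single 0 m : ℕ →₀ M) ∈ lift0 hinv N ↔ m ∈ N := by
  constructor
  · rintro ⟨m', hm', h⟩
    exact (Finsupp.single_injective 0 h) ▸ hm'
  · exact fun h => ⟨m, h, rfl⟩

lemma gc0 (hinv : IsInvPolyModule S M) :
    GaloisConnection (lift0 hinv) (drop0 hinv) := by
  intro N P
  constructor
  · intro h m hm
    exact h (⟨m, hm, rfl⟩ : ∃ m' ∈ N, single 0 m' = single 0 m)
  · rintro h p ⟨m, hm, rfl⟩
    exact h hm

lemma drop0_lift0 (hinv : IsInvPolyModule S M) (N : Submodule Rᵐᵒᵖ M) :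
    drop0 hinv (lift0 hinv N) = N := by
  ext m
  exact single0_mem_lift0 hinv

lemma lift0_bot (hinv : IsInvPolyModule S M) : lift0 hinv ⊥ = ⊥ := (gc0 hinv).l_bot

lemma lift0_eq_bot (hinv : IsInvPolyModule S M) {N : Submodule Rᵐᵒᵖ M} :
    lift0 hinv N = ⊥ ↔ N = ⊥ := by
  constructor
  · intro h
    rw [eq_bot_iff]
    intro m hm
    have h1 : (single 0 m : ℕ →₀ M) ∈ lift0 hinv N := ⟨m, hm, rfl⟩
    rw [h] at h1
    have := (Submodule.mem_bot _).1 h1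
    simpa [Finsupp.single_eq_zero] using this
  · rintro rfl
    exact lift0_bot hinv

lemma lift0_inf (hinv : IsInvPolyModule S M) (N K : Submodule Rᵐᵒᵖ M) :
    lift0 hinv (N ⊓ K) = lift0 hinv N ⊓ lift0 hinv K := by
  refine le_antisymm (le_inf ((gc0 hinv).monotone_l inf_le_left)
    ((gc0 hinv).monotone_l inf_le_right)) ?_
  rintro p hp
  obtain ⟨m, hm, rfl⟩ := (Submodule.mem_inf.1 hp).1
  exact ⟨m, Submodule.mem_inf.2 ⟨hm, (single0_mem_lift0 hinv).1 (Submodule.mem_inf.1 hp).2⟩, rfl⟩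

lemma eq_lift0_of_le (hinv : IsInvPolyModule S M) {P : Submodule Aᵐᵒᵖ (ℕ →₀ M)}
    {N : Submodule Rᵐᵒᵖ M} (h : P ≤ lift0 hinv N) :
    P = lift0 hinv (drop0 hinv P) := by
  refine le_antisymm ?_ ?_
  · intro p hp
    obtain ⟨m, _, rfl⟩ := h hp
    exact ⟨m, hp, rfl⟩
  · rintro p ⟨m, hm, rfl⟩
    exact hm

lemma essIn_M0 (hinv : IsInvPolyModule S M) :
    EssIn (lift0 hinv ⊤) (⊤ : Submodule Aᵐᵒᵖ (ℕ →₀ M)) := by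
  refine ⟨le_top, fun X _ hX0 => ?_⟩
  obtain ⟨p, hp, hp0⟩ := (Submodule.ne_bot_iff X).1 hX0
  obtain ⟨k, m, hm0, hkm⟩ := exists_xpow_smul hinv p hp0
  refine (Submodule.ne_bot_iff _).2 ⟨single 0 m, Submodule.mem_inf.2
    ⟨⟨m, trivial, rfl⟩, hkm ▸ X.smul_mem _ hp⟩, ?_⟩
  simp [Finsupp.single_eq_zero, hm0]

end InvPoly


/-- If `M` is completely `(σ,δ)`-compatible then `M[x⁻¹]` (as a right
`A`-module) and `M` (as a right `R`-module) have the same uniform dimension: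
for every `n`, one has uniform dimension `n` iff the other does (so both the
finite and the infinite case are covered). -/
theorem stmt8 (R A : Type*) [Ring R] [Ring A] (σ : R ≃+* R) (δ : R → R)
    (S : SkewOreRing R A σ δ) (M : Type*) [AddCommGroup M] [Module Rᵐᵒᵖ M]
    [Module Aᵐᵒᵖ (ℕ →₀ M)] (hinv : IsInvPolyModule S M)
    (hcompat : CompletelyCompatible R M (⇑σ) δ) :
    ∀ n : ℕ, HasUdim Rᵐᵒᵖ M n ↔ HasUdim Aᵐᵒᵖ (ℕ →₀ M) n := by
  intro n
  constructor
  · rintro ⟨U, hU0, hUuni, hUind, hUess⟩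
    refine ⟨fun i => lift0 hinv (U i), fun i hb => hU0 i ((lift0_eq_bot hinv).1 hb),
      ?_, ?_, ?_⟩
    · intro i P Q hP hQ hP0 hQ0
      have hPe := eq_lift0_of_le hinv hP
      have hQe := eq_lift0_of_le hinv hQ
      have hPle : drop0 hinv P ≤ U i := by
        have := (gc0 hinv).monotone_u hP
        rwa [drop0_lift0 hinv] at this
      have hQle : drop0 hinv Q ≤ U i := by
        have := (gc0 hinv).monotone_u hQ
        rwa [drop0_lift0 hinv] at this
      have hPne : drop0 hinv P ≠ ⊥ := fun hb => hP0 (by rw [hPe, hb, lift0_bot hinv])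
      have hQne : drop0 hinv Q ≠ ⊥ := fun hb => hQ0 (by rw [hQe, hb, lift0_bot hinv])
      have h := hUuni i _ _ hPle hQle hPne hQne
      intro hb
      apply h
      apply (lift0_eq_bot hinv).1
      rw [lift0_inf hinv, ← hPe, ← hQe, hb]
    · rw [iSupIndep_def]
      intro i
      have hsup : lift0 hinv (⨆ j, ⨆ _ : j ≠ i, U j)
          = ⨆ j, ⨆ _ : j ≠ i, lift0 hinv (U j) := by
        rw [(gc0 hinv).l_iSup]
        exact iSup_congr fun j => (gc0 hinv).l_iSup
      rw [_root_.disjoint_iff, ← hsup, ← lift0_inf hinv,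
        _root_.disjoint_iff.1 (iSupIndep_def.1 hUind i), lift0_bot hinv]
    · intro p hp0
      obtain ⟨k, m, hm0, hkm⟩ := exists_xpow_smul hinv p hp0
      obtain ⟨r, hr1, hr2⟩ := hUess m hm0
      have hcalc : op (S.x ^ k * S.φ (unop r)) • p = single 0 (r • m) := by
        rw [op_mul, mul_smul, hkm, smul_phi_single0 hinv, op_unop]
      have hsupeq : lift0 hinv (⨆ i, U i) = ⨆ i, lift0 hinv (U i) := (gc0 hinv).l_iSup
      refine ⟨op (S.x ^ k * S.φ (unop r)), ?_, ?_⟩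
      · rw [hcalc, ← hsupeq]
        exact ⟨r • m, hr1, rfl⟩
      · rw [hcalc]
        simp [Finsupp.single_eq_zero, hr2]
  · rintro ⟨U, hU0, hUuni, hUind, hUess⟩
    set M0 : Submodule Aᵐᵒᵖ (ℕ →₀ M) := lift0 hinv ⊤ with hM0
    set W : Fin n → Submodule Rᵐᵒᵖ M := fun i => drop0 hinv (U i ⊓ M0) with hWdef
    have hVW : ∀ i, lift0 hinv (W i) = U i ⊓ M0 := fun i =>
      (eq_lift0_of_le hinv (inf_le_right : U i ⊓ M0 ≤ M0)).symm
    have hVne : ∀ i, U i ⊓ M0 ≠ ⊥ := by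
      intro i hb
      have h1 := (essIn_M0 hinv).2 (U i) le_top (hU0 i)
      rw [inf_comm] at h1
      exact h1 hb
    refine ⟨W, ?_, ?_, ?_, ?_⟩
    · intro i hb
      exact hVne i (by rw [← hVW i, hb, lift0_bot hinv])
    · intro i P Q hP hQ hP0 hQ0
      have h := hUuni i (lift0 hinv P) (lift0 hinv Q)
        (((gc0 hinv).monotone_l hP).trans ((hVW i).le.trans inf_le_left))
        (((gc0 hinv).monotone_l hQ).trans ((hVW i).le.trans inf_le_left))
        (fun hb => hP0 ((lift0_eq_bot hinv).1 hb))
        (fun hb => hQ0 ((lift0_eq_bot hinv).1 hb))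
      intro hb
      exact h (by rw [← lift0_inf hinv, hb, lift0_bot hinv])
    · rw [iSupIndep_def]
      intro i
      rw [_root_.disjoint_iff]
      apply (lift0_eq_bot hinv).1
      apply le_bot_iff.1
      have hsup : lift0 hinv (⨆ j, ⨆ _ : j ≠ i, W j)
          = ⨆ j, ⨆ _ : j ≠ i, lift0 hinv (W j) := by
        rw [(gc0 hinv).l_iSup]
        exact iSup_congr fun j => (gc0 hinv).l_iSup
      calc lift0 hinv (W i ⊓ ⨆ j, ⨆ _ : j ≠ i, W j)
          = lift0 hinv (W i) ⊓ ⨆ j, ⨆ _ : j ≠ i, lift0 hinv (W j) := by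
            rw [lift0_inf hinv, hsup]
        _ ≤ U i ⊓ ⨆ j, ⨆ _ : j ≠ i, U j := by
            refine inf_le_inf ((hVW i).le.trans inf_le_left)
              (iSup_mono fun j => iSup_mono' fun hj =>
                ⟨hj, (hVW j).le.trans inf_le_left⟩)
        _ ≤ ⊥ := (_root_.disjoint_iff.1 (iSupIndep_def.1 hUind i)).le
    · -- essentiality on the R side
      have hessU : EssIn (⨆ i, U i) (⊤ : Submodule Aᵐᵒᵖ (ℕ →₀ M)) :=
        (essentialIn_iff_essIn_top _).1 hUess
      have h1 : ∀ i, EssIn (U i ⊓ M0) (U i) := by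
        intro i
        refine ⟨inf_le_left, fun X hX hX0 => ?_⟩
        have h2 := (essIn_M0 hinv).2 X le_top hX0
        intro hb
        apply h2
        rw [eq_bot_iff] at hb ⊢
        intro y hy
        have hy1 := (Submodule.mem_inf.1 hy).1
        have hy2 := (Submodule.mem_inf.1 hy).2
        exact hb (Submodule.mem_inf.2 ⟨Submodule.mem_inf.2 ⟨hX hy2, hy1⟩, hy2⟩)
      have huniv : ∀ f : Fin n → Submodule Aᵐᵒᵖ (ℕ →₀ M),
          (⨆ i ∈ (Finset.univ : Finset (Fin n)), f i) = ⨆ i, f i := by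
        intro f
        simp
      have hessV : EssIn (⨆ i, U i ⊓ M0) (⨆ i, U i) := by
        have := essIn_biSup (V := fun i => U i ⊓ M0) h1 hUind Finset.univ
        rwa [huniv, huniv] at this
      have hessVtop : EssIn (⨆ i, U i ⊓ M0) (⊤ : Submodule Aᵐᵒᵖ (ℕ →₀ M)) :=
        hessV.trans hessU
      intro m hm0
      have hsm : (single 0 m : ℕ →₀ M) ≠ 0 := by
        simp [Finsupp.single_eq_zero, hm0]
      have hspan : Submodule.span Aᵐᵒᵖ {(single 0 m : ℕ →₀ M)} ≠ ⊥ :=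
        fun hb => hsm (Submodule.span_singleton_eq_bot.1 hb)
      obtain ⟨q, hq, hq0⟩ := (Submodule.ne_bot_iff _).1 (hessVtop.2 _ le_top hspan)
      obtain ⟨a, rfl⟩ := Submodule.mem_span_singleton.1 (Submodule.mem_inf.1 hq).2
      obtain ⟨r, hr⟩ := smul_single0 hinv (unop a)
      have hq1 : a • (single 0 m : ℕ →₀ M) = single 0 (op r • m) := by
        rw [← op_unop a, hr]
      have hmem : op r • m ∈ ⨆ i, W i := by
        have h2 : (⨆ i, U i ⊓ M0) = lift0 hinv (⨆ i, W i) := by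
          rw [(gc0 hinv).l_iSup]
          exact (iSup_congr fun i => hVW i).symm
        have h3 := (Submodule.mem_inf.1 hq).1
        rw [h2] at h3
        rw [hq1] at h3
        exact (single0_mem_lift0 hinv).1 h3
      refine ⟨op r, hmem, fun hb => hq0 ?_⟩
      rw [hq1, hb, Finsupp.single_zero]
end

section
/- If N is a small submodule of a right R-module M, then corank(M) = corank(M/N). Conversely, if corank(M) < ∞ and corank(M) = corank(M/N), then N is small in M. -/
section Helpers

variable (S : Type*) [Ring S] (Mod : Type*) [AddCommGroup Mod] [Module S Mod]

def corankSet : Set ℕ∞ :=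
  {c : ℕ∞ | ∃ k : ℕ, c = (k : ℕ∞) ∧ ∃ L : Fin k → Submodule S Mod,
    (∀ i, L i ≠ ⊤) ∧
    Function.Surjective (LinearMap.pi (fun i => (L i).mkQ) : Mod →ₗ[S] ∀ i, Mod ⧸ L i)}

lemma corank_eq_sSup : corank S Mod = sSup (corankSet S Mod) := rfl

variable {S Mod}

lemma pi_mkQ_surj_iff {k : ℕ} (L : Fin k → Submodule S Mod) :
    Function.Surjective (LinearMap.pi (fun i => (L i).mkQ) : Mod →ₗ[S] ∀ i, Mod ⧸ L i) ↔
      ∀ x : Fin k → Mod, ∃ m : Mod, ∀ i, m - x i ∈ L i := by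
  constructor
  · intro h x
    obtain ⟨m, hm⟩ := h (fun i => (L i).mkQ (x i))
    refine ⟨m, fun i => ?_⟩
    have := congrFun hm i
    simp only [LinearMap.pi_apply, Submodule.mkQ_apply] at this
    exact (Submodule.Quotient.eq _).mp this
  · intro h y
    choose x hx using fun i => Submodule.Quotient.mk_surjective (L i) (y i)
    obtain ⟨m, hm⟩ := h x
    refine ⟨m, funext fun i => ?_⟩
    simp only [LinearMap.pi_apply, Submodule.mkQ_apply, ← hx i]
    exact (Submodule.Quotient.eq _).mpr (hm i)

lemma comap_mkQ_ne_top {N : Submodule S Mod} {L : Submodule S (Mod ⧸ N)} (hL : L ≠ ⊤) :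
    L.comap N.mkQ ≠ ⊤ := by
  intro h
  apply hL
  have h2 := Submodule.map_comap_eq_of_surjective (Submodule.mkQ_surjective N) L
  rw [h, Submodule.map_top, Submodule.range_mkQ] at h2
  exact h2.symm

lemma quot_mem_corankSet {N : Submodule S Mod} {c : ℕ∞} (hc : c ∈ corankSet S (Mod ⧸ N)) :
    c ∈ corankSet S Mod := by
  obtain ⟨k, rfl, L, hL, hsurj⟩ := hc
  refine ⟨k, rfl, fun i => (L i).comap N.mkQ, fun i => comap_mkQ_ne_top (hL i), ?_⟩
  rw [pi_mkQ_surj_iff]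
  intro x
  obtain ⟨mbar, hm⟩ := (pi_mkQ_surj_iff L).mp hsurj (fun i => N.mkQ (x i))
  obtain ⟨m, hm0⟩ := Submodule.Quotient.mk_surjective N mbar
  refine ⟨m, fun i => ?_⟩
  simp only [Submodule.mem_comap, map_sub, Submodule.mkQ_apply, hm0]
  exact hm i

lemma small_mem_corankSet {N : Submodule S Mod} (hN : IsSmallSub S Mod N) {c : ℕ∞}
    (hc : c ∈ corankSet S Mod) : c ∈ corankSet S (Mod ⧸ N) := by
  obtain ⟨k, rfl, L, hL, hsurj⟩ := hc
  refine ⟨k, rfl, fun i => (L i).map N.mkQ, fun i h => hL i ?_, ?_⟩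
  · have h' : Submodule.map N.mkQ (L i) = ⊤ := h
    have h2 := Submodule.comap_map_eq N.mkQ (L i)
    rw [h', Submodule.comap_top, Submodule.ker_mkQ] at h2
    exact hN (L i) (by rw [sup_comm]; exact h2.symm)
  · rw [pi_mkQ_surj_iff]
    intro x
    choose y hy using fun i => Submodule.Quotient.mk_surjective N (x i)
    obtain ⟨m, hm⟩ := (pi_mkQ_surj_iff L).mp hsurj y
    refine ⟨N.mkQ m, fun i => ?_⟩
    rw [show N.mkQ m - x i = N.mkQ (m - y i) by
      rw [map_sub, Submodule.mkQ_apply, Submodule.mkQ_apply, hy]]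
    exact Submodule.mem_map_of_mem (hm i)

lemma corank_mem_of_ne_top (h : corank S Mod ≠ ⊤) :
    corank S Mod ∈ corankSet S Mod := by
  obtain ⟨n, hn⟩ : ∃ n : ℕ, corank S Mod = (n : ℕ∞) :=
    ⟨(corank S Mod).toNat, (ENat.coe_toNat h).symm⟩
  rw [hn]
  rcases n with _ | m
  · exact ⟨0, rfl, fun i => i.elim0, fun i => i.elim0, fun y => ⟨0, funext fun i => i.elim0⟩⟩
  · have hlt : ((m : ℕ∞)) < sSup (corankSet S Mod) := by
      rw [← corank_eq_sSup, hn]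
      exact_mod_cast Nat.lt_succ_self m
    obtain ⟨c, hc, hmc⟩ := lt_sSup_iff.mp hlt
    obtain ⟨k, rfl, hk⟩ := hc
    have h1 : (k : ℕ∞) ≤ ((m + 1 : ℕ) : ℕ∞) := by
      rw [← hn, corank_eq_sSup]; exact le_sSup ⟨k, rfl, hk⟩
    have hkm : k = m + 1 := le_antisymm (by exact_mod_cast h1) (by exact_mod_cast hmc)
    subst hkm
    exact ⟨m + 1, rfl, hk⟩

end Helpers

/-- If `N` is small in `M` then `corank M = corank (M/N)`; conversely, if
`corank M < ∞` and `corank M = corank (M/N)` then `N` is small. -/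
theorem stmt10 (S : Type*) [Ring S] (Mod : Type*) [AddCommGroup Mod] [Module S Mod]
    (N : Submodule S Mod) :
    (IsSmallSub S Mod N → corank S Mod = corank S (Mod ⧸ N)) ∧
    (corank S Mod < ⊤ → corank S Mod = corank S (Mod ⧸ N) → IsSmallSub S Mod N) := by
  constructor
  · intro hsmall
    rw [corank_eq_sSup, corank_eq_sSup]
    apply le_antisymm
    · exact sSup_le fun c hc => le_sSup (small_mem_corankSet hsmall hc)
    · exact sSup_le fun c hc => le_sSup (quot_mem_corankSet hc)
  · intro hfin heq L hNL
    by_contra hL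
    have hne : corank S Mod ≠ ⊤ := hfin.ne
    obtain ⟨n, hn⟩ : ∃ n : ℕ, corank S Mod = (n : ℕ∞) :=
      ⟨(corank S Mod).toNat, (ENat.coe_toNat hne).symm⟩
    have hmem : corank S (Mod ⧸ N) ∈ corankSet S (Mod ⧸ N) :=
      corank_mem_of_ne_top (by rw [← heq]; exact hne)
    rw [← heq, hn] at hmem
    obtain ⟨k, hk, Lb, hLb, hsurj⟩ := hmem
    have hnk : k = n := by exact_mod_cast hk.symm
    subst hnk
    have hmem' : ((k + 1 : ℕ) : ℕ∞) ∈ corankSet S Mod := by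
      refine ⟨k + 1, rfl, Fin.snoc (fun i => (Lb i).comap N.mkQ) L, ?_, ?_⟩
      · intro i
        refine Fin.lastCases ?_ ?_ i
        · rw [Fin.snoc_last]; exact hL
        · intro j; rw [Fin.snoc_castSucc]; exact comap_mkQ_ne_top (hLb j)
      · rw [pi_mkQ_surj_iff]
        intro x
        obtain ⟨mbar, hm⟩ := (pi_mkQ_surj_iff Lb).mp hsurj (fun i => N.mkQ (x i.castSucc))
        obtain ⟨x0, hx0⟩ := Submodule.Quotient.mk_surjective N mbar
        have hmem2 : x (Fin.last k) - x0 ∈ N ⊔ L := by rw [hNL]; trivial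
        obtain ⟨a, ha, b, hb, hab⟩ := Submodule.mem_sup.mp hmem2
        refine ⟨x0 + a, fun i => ?_⟩
        refine Fin.lastCases ?_ ?_ i
        · rw [Fin.snoc_last]
          have hb' : x0 + a - x (Fin.last k) = -b := by
            rw [show x (Fin.last k) = x0 + (a + b) by rw [hab]; abel]
            abel
          rw [hb']; exact neg_mem hb
        · intro j
          rw [Fin.snoc_castSucc]
          simp only [Submodule.mem_comap, map_sub, map_add]
          have ha0 : N.mkQ a = 0 := (Submodule.Quotient.mk_eq_zero N).mpr ha
          rw [ha0, add_zero, Submodule.mkQ_apply, hx0]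
          exact hm j
    have hle : ((k + 1 : ℕ) : ℕ∞) ≤ (k : ℕ∞) := by
      rw [← hn, corank_eq_sSup]; exact le_sSup hmem'
    have : k + 1 ≤ k := by exact_mod_cast hle
    omega
end

section
/- A nonzero right R-module M is hollow (every proper submodule is small) if and only if corank(M) = 1. -/
section Aux
variable (S : Type*) [Ring S] (Mod : Type*) [AddCommGroup Mod] [Module S Mod]

/-- From surjectivity of the pi map and two distinct indices, the two kernels sup to ⊤. -/
lemma aux_sup_top {k : ℕ} (L : Fin k → Submodule S Mod)
    (hs : Function.Surjective (LinearMap.pi (fun i => (L i).mkQ) : Mod →ₗ[S] ∀ i, Mod ⧸ L i))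
    {i j : Fin k} (hij : i ≠ j) : L i ⊔ L j = ⊤ := by
  rw [eq_top_iff]
  intro m _
  obtain ⟨x, hx⟩ := hs (Function.update 0 i ((L i).mkQ m))
  have hxi : (L i).mkQ x = (L i).mkQ m := by
    have := congrFun hx i
    simpa [Function.update_self] using this
  have hxj : (L j).mkQ x = 0 := by
    have := congrFun hx j
    simpa [Function.update_of_ne (Ne.symm hij)] using this
  have h1 : m - x ∈ L i := by
    have hxm : x - m ∈ L i := (Submodule.Quotient.eq (L i)).mp (by simpa using hxi)
    simpa using (L i).neg_mem hxm
  have h2 : x ∈ L j := by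
    simpa [Submodule.mkQ_apply, Submodule.Quotient.mk_eq_zero] using hxj
  have : m = (m - x) + x := by abel
  rw [this]
  exact Submodule.add_mem_sup h1 h2

/-- Converse: if N ⊔ L = ⊤ then the pair pi map is surjective. -/
lemma aux_surj (N L : Submodule S Mod) (h : N ⊔ L = ⊤) :
    Function.Surjective
      (LinearMap.pi (fun i => ((![N, L] : Fin 2 → Submodule S Mod) i).mkQ) :
        Mod →ₗ[S] ∀ i : Fin 2, Mod ⧸ (![N, L] : Fin 2 → Submodule S Mod) i) := by
  intro f
  obtain ⟨a, ha⟩ := Submodule.mkQ_surjective N (f 0)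
  obtain ⟨b, hb⟩ := Submodule.mkQ_surjective L (f 1)
  have : a - b ∈ N ⊔ L := h ▸ Submodule.mem_top
  obtain ⟨n, hn, l, hl, hnl⟩ := Submodule.mem_sup.mp this
  refine ⟨a - n, funext fun i => ?_⟩
  fin_cases i
  · show N.mkQ (a - n) = f 0
    rw [← ha]
    rw [Submodule.mkQ_apply, Submodule.mkQ_apply, Submodule.Quotient.eq]
    simpa using N.neg_mem hn
  · show L.mkQ (a - n) = f 1
    rw [← hb]
    rw [Submodule.mkQ_apply, Submodule.mkQ_apply, Submodule.Quotient.eq]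
    have : a - n - b = l := by
      rw [show a - n - b = (a - b) - n by abel, ← hnl]; abel
    rw [this]; exact hl

end Aux

/-- A nonzero module is hollow iff its corank is `1`. -/
theorem stmt12 (S : Type*) [Ring S] (Mod : Type*) [AddCommGroup Mod] [Module S Mod]
    [Nontrivial Mod] :
    IsHollowMod S Mod ↔ corank S Mod = 1 := by
  rw [corank]
  constructor
  · intro hH
    refine le_antisymm (sSup_le ?_) (le_sSup ?_)
    · rintro c ⟨k, rfl, L, hL, hs⟩
      by_contra hc
      have hk1 : ¬ (k : ℕ) ≤ 1 := by exact_mod_cast fun h => hc (by exact_mod_cast h)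
      have hk : 2 ≤ k := by omega
      have hij : (⟨0, by omega⟩ : Fin k) ≠ ⟨1, by omega⟩ := by
        intro h; simpa using congrArg Fin.val h
      have hsup := aux_sup_top S Mod L hs hij
      exact hL _ (hH _ (hL _) _ hsup)
    · refine ⟨1, Nat.cast_one.symm, fun _ => ⊥, fun _ => bot_ne_top, ?_⟩
      intro f
      obtain ⟨x, hx⟩ := Submodule.mkQ_surjective (⊥ : Submodule S Mod) (f 0)
      exact ⟨x, funext fun i => by fin_cases i; exact hx⟩
  · intro h N hN L hsup
    by_contra hL
    have mem : (2 : ℕ∞) ∈ {c : ℕ∞ | ∃ k : ℕ, c = (k : ℕ∞) ∧ ∃ L : Fin k → Submodule S Mod,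
        (∀ i, L i ≠ ⊤) ∧
        Function.Surjective (LinearMap.pi (fun i => (L i).mkQ) : Mod →ₗ[S] ∀ i, Mod ⧸ L i)} := by
      refine ⟨2, by norm_cast, ![N, L], ?_, aux_surj S Mod N L hsup⟩
      intro i; fin_cases i <;> simpa using (by assumption : _ ≠ ⊤)
    have h2 := le_sSup mem
    rw [h] at h2
    norm_num at h2
end

section
/- A right R-module M has finite corank if and only if there exist hollow R-modules H₁, …, H_k and a surjective homomorphism φ : M → H₁ ⊕ ⋯ ⊕ H_k whose kernel is a small submodule of M. -/
/-!
Everything happens in the modular lattice of submodules, where the corank is the largest size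
of a coindependent family: proper submodules `Lᵢ`, each codisjoint from the meet of the others,
which is exactly surjectivity of `M → ∏ M ⧸ Lᵢ`.

If the corank is finite, take a coindependent family of maximal size. A quotient `M ⧸ Lᵢ` that
is not hollow would let us split `Lᵢ` into two members, and a meet that is not small would let
us add one more member; so the family is a hollow decomposition with small kernel.

Conversely, let the `Lᵢ` have hollow quotients and small meet. If `B ⊔ Lᵢ ≠ ⊤` for all `i`, then
each `B ⊔ Lᵢ` is small over `Lᵢ`, smallness passes to meets of coindependent families, and so
`B` is small. A Steinitz exchange then bounds every coindependent family by the number of `Lᵢ`.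
-/

open Finset OrderDual

section Lattice

variable {α : Type*} [Lattice α] [BoundedOrder α]

def IsSmallOver (a e : α) : Prop :=
  ∀ c, a ≤ c → Codisjoint e c → c = ⊤

def IsHollowOver (a : α) : Prop :=
  ∀ x y, a ≤ x → a ≤ y → Codisjoint x y → x = ⊤ ∨ y = ⊤

/-- Independence in the order dual: every `a ∈ s` is codisjoint from the meet of the others. -/
def IsCoindependent (s : Finset α) : Prop :=
  ⊤ ∉ s ∧ s.SupIndep toDual

theorem IsSmallOver.mono_right {a e e' : α} (h : IsSmallOver a e) (he : e' ≤ e) :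
    IsSmallOver a e' :=
  fun c hc hec => h c hc (hec.mono_left he)

theorem IsSmallOver.trans {a b e : α} (hab : IsSmallOver a b) (hbe : IsSmallOver b e) :
    IsSmallOver a e :=
  fun c hc hec => hab c hc <|
    codisjoint_iff.2 (hbe (b ⊔ c) le_sup_left (hec.mono_right le_sup_right))

theorem Finset.SupIndep.codisjoint_inf_erase [DecidableEq α] {s : Finset α}
    (hs : s.SupIndep toDual) {a : α} (ha : a ∈ s) : Codisjoint a ((s.erase a).inf id) :=
  hs (erase_subset a s) ha (notMem_erase a s)

theorem Finset.notMem_of_codisjoint_inf {s : Finset α} {d : α} (hd : d ≠ ⊤)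
    (h : Codisjoint d (s.inf id)) : d ∉ s :=
  fun hds => hd (codisjoint_self.1 (h.mono_right (inf_le hds)))

namespace IsCoindependent

variable {s t : Finset α}

theorem ne_top (hs : IsCoindependent s) {a : α} (ha : a ∈ s) : a ≠ ⊤ :=
  fun h => hs.1 (h ▸ ha)

theorem empty : IsCoindependent (∅ : Finset α) :=
  ⟨notMem_empty ⊤, supIndep_empty _⟩

theorem subset (hs : IsCoindependent s) (hts : t ⊆ s) : IsCoindependent t :=
  ⟨fun h => hs.1 (hts h), hs.2.subset hts⟩

theorem insert_of_codisjoint [DecidableEq α] [IsModularLattice α] (hs : IsCoindependent s)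
    {d : α} (hd : d ≠ ⊤) (h : Codisjoint d (s.inf id)) : IsCoindependent (insert d s) :=
  ⟨by simp [Ne.symm hd, hs.1], hs.2.insert h⟩

end IsCoindependent

section Modular

variable [IsModularLattice α]

/-- `· ⊓ b` carries `[a, ⊤]` isomorphically onto `[a ⊓ b, b]` when `a ⊔ b = ⊤`. -/
theorem IsSmallOver.inf_right {a x b : α} (h : IsSmallOver a x) (hab : Codisjoint a b) :
    IsSmallOver (a ⊓ b) (x ⊓ b) := by
  intro c hc hxc
  have hb : x ⊓ b ⊔ c ⊓ b = b := by
    rw [← sup_inf_assoc_of_le c inf_le_right, hxc.eq_top, top_inf_eq]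
  have hca : c ⊓ b ⊔ a = ⊤ := by
    refine h _ le_sup_right (codisjoint_iff.2 (eq_top_iff.2 ?_))
    calc ⊤ = a ⊔ b := hab.eq_top.symm
      _ = a ⊔ (x ⊓ b ⊔ c ⊓ b) := by rw [hb]
      _ ≤ x ⊔ (c ⊓ b ⊔ a) := sup_le (le_sup_of_le_right le_sup_right)
          (sup_le (le_sup_of_le_left inf_le_left) (le_sup_of_le_right le_sup_left))
  have hbc : b ≤ c :=
    calc b = (c ⊓ b ⊔ a) ⊓ b := by rw [hca, top_inf_eq]
      _ = c ⊓ b ⊔ a ⊓ b := sup_inf_assoc_of_le a inf_le_right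
      _ ≤ c := sup_le inf_le_left hc
  exact eq_top_iff.2 (hxc.eq_top ▸ sup_le (inf_le_right.trans hbc) le_rfl)

theorem IsSmallOver.finset_inf [DecidableEq α] {s : Finset α} (hs : s.SupIndep toDual)
    {e : α → α} (hle : ∀ a ∈ s, a ≤ e a) (he : ∀ a ∈ s, IsSmallOver a (e a)) :
    IsSmallOver (s.inf id) (s.inf e) := by
  induction s using Finset.induction_on with
  | empty => exact fun c hc _ => top_le_iff.1 hc
  | insert a s ha ih =>
    have hcod : Codisjoint a (s.inf id) := hs (subset_insert a s) (mem_insert_self a s) ha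
    have ihs := ih (hs.subset (subset_insert a s)) (fun b hb => hle b (mem_insert_of_mem hb))
      fun b hb => he b (mem_insert_of_mem hb)
    have h₁ : IsSmallOver (a ⊓ s.inf id) (e a ⊓ s.inf id) :=
      (he a (mem_insert_self a s)).inf_right hcod
    have h₂ : IsSmallOver (e a ⊓ s.inf id) (e a ⊓ s.inf e) := by
      simpa only [inf_comm (e a)] using
        ihs.inf_right (hcod.symm.mono_right (hle a (mem_insert_self a s)))
    simpa only [inf_insert, id] using h₁.trans h₂

theorem isSmallOver_bot_of_forall_not_codisjoint [DecidableEq α] {s : Finset α}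
    (hs : s.SupIndep toDual) (hhollow : ∀ a ∈ s, IsHollowOver a)
    (hsmall : IsSmallOver ⊥ (s.inf id)) {b : α} (hb : ∀ a ∈ s, ¬ Codisjoint a b) :
    IsSmallOver ⊥ b := by
  have hsup : ∀ a ∈ s, IsSmallOver a (a ⊔ b) := fun a ha c hac hc =>
    (hhollow a ha _ c le_sup_left hac hc).resolve_left fun h => hb a ha (codisjoint_iff.2 h)
  exact (hsmall.trans (IsSmallOver.finset_inf hs (fun _ _ => le_sup_left) hsup)).mono_right
    (Finset.le_inf fun a _ => le_sup_right)

theorem codisjoint_inf_of_le {a x y X : α} (haX : Codisjoint a X) (hax : a ≤ x) (hay : a ≤ y)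
    (hxy : Codisjoint x y) : Codisjoint y (x ⊓ X) := by
  have hx : x ≤ y ⊔ x ⊓ X :=
    calc x = (a ⊔ X) ⊓ x := by rw [haX.eq_top, top_inf_eq]
      _ = a ⊔ X ⊓ x := sup_inf_assoc_of_le X hax
      _ ≤ y ⊔ x ⊓ X := sup_le_sup hay (inf_comm _ _).le
  exact codisjoint_iff_le_sup.2 ((codisjoint_iff_le_sup.1 hxy).trans (sup_le hx le_sup_left))

namespace IsCoindependent

variable [DecidableEq α] {s t : Finset α}

theorem exists_card_succ_of_not_isHollowOver (ht : IsCoindependent t) {a : α} (ha : a ∈ t)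
    (hna : ¬ IsHollowOver a) : ∃ t' : Finset α, IsCoindependent t' ∧ t'.card = t.card + 1 := by
  simp only [IsHollowOver, not_forall, not_or] at hna
  obtain ⟨x, y, hax, hay, hxy, hx, hy⟩ := hna
  have haX := ht.2.codisjoint_inf_erase ha
  have hxX : Codisjoint x ((t.erase a).inf id) := haX.mono_left hax
  have hyX : Codisjoint y ((insert x (t.erase a)).inf id) := by
    simpa only [inf_insert, id] using codisjoint_inf_of_le haX hax hay hxy
  refine ⟨_, ((ht.subset (erase_subset a t)).insert_of_codisjoint hx hxX).insert_of_codisjoint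
    hy hyX, ?_⟩
  rw [card_insert_of_notMem (notMem_of_codisjoint_inf hy hyX),
    card_insert_of_notMem (notMem_of_codisjoint_inf hx hxX), card_erase_add_one ha]

theorem exists_card_succ_of_not_isSmallOver (ht : IsCoindependent t)
    (hns : ¬ IsSmallOver ⊥ (t.inf id)) :
    ∃ t' : Finset α, IsCoindependent t' ∧ t'.card = t.card + 1 := by
  simp only [IsSmallOver, bot_le, true_imp_iff, not_forall] at hns
  obtain ⟨c, hc, hne⟩ := hns
  exact ⟨_, ht.insert_of_codisjoint hne hc.symm,
    card_insert_of_notMem (notMem_of_codisjoint_inf hne hc.symm)⟩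

/-- Steinitz exchange: a member of `t \ s` can be traded for a member of `s`. -/
theorem card_le (hs : IsCoindependent s) (hhollow : ∀ a ∈ s, IsHollowOver a)
    (hsmall : IsSmallOver ⊥ (s.inf id)) (ht : IsCoindependent t) : t.card ≤ s.card := by
  induction h : (t \ s).card generalizing t with
  | zero => exact card_le_card (sdiff_eq_empty_iff_subset.1 (card_eq_zero.1 h))
  | succ n ih =>
    obtain ⟨b, hb⟩ : (t \ s).Nonempty := card_pos.1 (by omega)
    have hbt : b ∈ t := (mem_sdiff.1 hb).1
    obtain ⟨a, has, hab⟩ : ∃ a ∈ s, Codisjoint a ((t.erase b).inf id) := by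
      by_contra! hno
      exact ht.ne_top hbt <| isSmallOver_bot_of_forall_not_codisjoint hs.2 hhollow hsmall hno b
        bot_le (ht.2.codisjoint_inf_erase hbt).symm
    have hat : a ∉ t.erase b := notMem_of_codisjoint_inf (hs.ne_top has) hab
    have := ih ((ht.subset (erase_subset b t)).insert_of_codisjoint (hs.ne_top has) hab) <| by
      rw [insert_sdiff_of_mem _ has, erase_sdiff_comm, card_erase_of_mem hb, h,
        Nat.add_sub_cancel]
    rwa [card_insert_of_notMem hat, card_erase_add_one hbt] at this

end IsCoindependent

theorem exists_isCoindependent_isHollowOver_isSmallOver [DecidableEq α]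
    (hbdd : BddAbove {n | ∃ t : Finset α, IsCoindependent t ∧ t.card = n}) :
    ∃ t : Finset α, IsCoindependent t ∧ (∀ a ∈ t, IsHollowOver a) ∧
      IsSmallOver ⊥ (t.inf id) := by
  have hne : {n | ∃ t : Finset α, IsCoindependent t ∧ t.card = n}.Nonempty :=
    ⟨0, ∅, .empty, rfl⟩
  obtain ⟨t, ht, htcard⟩ := Nat.sSup_mem hne hbdd
  have hmax : ∀ t', IsCoindependent t' → t'.card ≠ t.card + 1 := fun t' ht' h => by
    have := le_csSup hbdd ⟨t', ht', h⟩
    omega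
  refine ⟨t, ht, fun a ha => ?_, ?_⟩ <;> by_contra hneg
  · obtain ⟨t', ht', hcard⟩ := ht.exists_card_succ_of_not_isHollowOver ha hneg
    exact hmax t' ht' hcard
  · obtain ⟨t', ht', hcard⟩ := ht.exists_card_succ_of_not_isSmallOver hneg
    exact hmax t' ht' hcard

end Modular

end Lattice

theorem Finset.exists_fin_embedding_map_univ_eq {α : Type*} (t : Finset α) :
    ∃ (k : ℕ) (f : Fin k ↪ α), univ.map f = t :=
  ⟨t.card, t.equivFin.symm.toEmbedding.trans (.subtype (· ∈ t)), by
    ext a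
    simpa using ⟨fun ⟨i, hi⟩ => hi ▸ (t.equivFin.symm i).2,
      fun ha => ⟨t.equivFin ⟨a, ha⟩, by simp⟩⟩⟩

namespace Submodule

variable {R M : Type*} [Ring R] [AddCommGroup M] [Module R M]

theorem isSmallSub_iff_isSmallOver_bot (N : Submodule R M) :
    IsSmallSub R M N ↔ IsSmallOver ⊥ N :=
  ⟨fun h c _ hc => h c hc.eq_top, fun h c hc => h c bot_le (codisjoint_iff.2 hc)⟩

theorem isHollowMod_quotient_iff (L : Submodule R M) :
    IsHollowMod R (M ⧸ L) ↔ IsHollowOver L := by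
  constructor
  · intro h x y hx hy hxy
    by_contra! hne
    have hx' : map L.mkQ x ≠ ⊤ := by rw [Ne, map_mkQ_eq_top, sup_eq_right.2 hx]; exact hne.1
    have := h _ hx' (map L.mkQ y) (by rw [← map_sup, hxy.eq_top, map_top, range_mkQ])
    rw [map_mkQ_eq_top, sup_eq_right.2 hy] at this
    exact hne.2 this
  · intro h N hN N' hNN'
    obtain ⟨x, rfl⟩ : ∃ x, map L.mkQ x = N := ⟨_, map_comap_eq_of_surjective L.mkQ_surjective N⟩
    obtain ⟨y, rfl⟩ : ∃ y, map L.mkQ y = N' :=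
      ⟨_, map_comap_eq_of_surjective L.mkQ_surjective N'⟩
    rw [← map_sup, map_mkQ_eq_top] at hNN'
    rw [Ne, map_mkQ_eq_top] at hN
    rw [map_mkQ_eq_top]
    exact (h _ _ le_sup_left le_sup_left
      (codisjoint_iff.2 (by rw [← sup_sup_distrib_left, hNN']))).resolve_left hN

variable {ι : Type*} [Fintype ι] (L : ι → Submodule R M)

theorem ker_pi_mkQ : LinearMap.ker (LinearMap.pi fun i => (L i).mkQ) = univ.inf L := by
  simp [LinearMap.ker_pi, inf_univ_eq_iInf]

variable [DecidableEq ι]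

theorem pi_mkQ_eq_single_iff (i : ι) (x v : M) :
    LinearMap.pi (fun j => (L j).mkQ) v = Pi.single i (Quotient.mk x) ↔
      v ∈ (univ.erase i).inf L ∧ x - v ∈ L i := by
  simp only [funext_iff, LinearMap.pi_apply, mkQ_apply, mem_finsetInf, mem_erase, mem_univ,
    and_true]
  constructor
  · intro h
    refine ⟨fun j hj => ?_, ?_⟩
    · simpa [Pi.single_eq_of_ne hj, Quotient.mk_eq_zero] using h j
    · simpa [Quotient.eq, ← neg_mem_iff (x := v - x)] using h i
  · rintro ⟨hv, hxv⟩ j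
    rcases eq_or_ne j i with rfl | hj
    · simpa [Quotient.eq, ← neg_mem_iff (x := v - x)] using hxv
    · simpa [Pi.single_eq_of_ne hj, Quotient.mk_eq_zero] using hv j hj

theorem surjective_pi_mkQ_iff :
    Function.Surjective (LinearMap.pi fun i => (L i).mkQ) ↔ univ.SupIndep (toDual ∘ L) := by
  simp only [supIndep_iff_disjoint_erase, mem_univ, forall_const]
  show _ ↔ ∀ i, Codisjoint (L i) ((univ.erase i).inf L)
  constructor
  · intro hsurj i
    rw [codisjoint_iff_le_sup]
    intro x _
    obtain ⟨v, hv⟩ := hsurj (Pi.single i (Quotient.mk x))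
    obtain ⟨hvL, hxv⟩ := (pi_mkQ_eq_single_iff L i x v).1 hv
    exact mem_sup.2 ⟨x - v, hxv, v, hvL, sub_add_cancel x v⟩
  · intro hL
    rw [← LinearMap.range_eq_top, eq_top_iff, ← LinearMap.iSup_range_single R]
    refine iSup_le fun i => ?_
    rintro _ ⟨z, rfl⟩
    obtain ⟨x, rfl⟩ := Quotient.mk_surjective _ z
    obtain ⟨u, hu, v, hv, rfl⟩ := mem_sup.1 ((hL i).eq_top ▸ mem_top (x := x))
    exact ⟨v, (pi_mkQ_eq_single_iff L i _ v).2 ⟨hv, by simpa using hu⟩⟩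

end Submodule

theorem exists_fin_iff_exists_isCoindependent {R M : Type*} [Ring R] [AddCommGroup M]
    [Module R M] (k : ℕ) :
    (∃ L : Fin k → Submodule R M, (∀ i, L i ≠ ⊤) ∧
        Function.Surjective (LinearMap.pi fun i => (L i).mkQ)) ↔
      ∃ t : Finset (Submodule R M), IsCoindependent t ∧ t.card = k := by
  classical
  constructor
  · rintro ⟨L, hne, hsurj⟩
    have hL := (Submodule.surjective_pi_mkQ_iff L).1 hsurj
    have hinj : Function.Injective L := fun i j hij => by
      by_contra hij'
      have h : Codisjoint (L i) (L j) := hL.pairwiseDisjoint (mem_univ i) (mem_univ j) hij'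
      rw [hij, codisjoint_self] at h
      exact hne j h
    refine ⟨univ.image L, ⟨by simpa using hne, hL.image⟩, ?_⟩
    rw [card_image_of_injective _ hinj, card_univ, Fintype.card_fin]
  · rintro ⟨t, ht, rfl⟩
    obtain ⟨k, f, rfl⟩ := t.exists_fin_embedding_map_univ_eq
    rw [card_map, card_univ, Fintype.card_fin]
    exact ⟨f, fun i => ht.ne_top (Finset.mem_map_of_mem f (mem_univ i)),
      (Submodule.surjective_pi_mkQ_iff _).2 (supIndep_map.1 ht.2)⟩

theorem corank_lt_top_iff (R M : Type*) [Ring R] [AddCommGroup M] [Module R M] :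
    corank R M < ⊤ ↔
      BddAbove {n | ∃ t : Finset (Submodule R M), IsCoindependent t ∧ t.card = n} := by
  constructor
  · refine fun h => ⟨(corank R M).toNat, ?_⟩
    rintro n ⟨t, ht, rfl⟩
    have : (t.card : ℕ∞) ≤ corank R M :=
      le_sSup ⟨t.card, rfl, (exists_fin_iff_exists_isCoindependent _).2 ⟨t, ht, rfl⟩⟩
    exact_mod_cast (ENat.natCast_toNat h.ne).symm ▸ this
  · rintro ⟨N, hN⟩
    refine lt_of_le_of_lt (sSup_le ?_) (ENat.natCast_lt_top N)
    rintro _ ⟨k, rfl, hk⟩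
    exact_mod_cast hN ((exists_fin_iff_exists_isCoindependent k).1 hk)

/-- `corank M < ∞` iff there are hollow modules `H₁,…,H_k` and a surjection
`φ : M → H₁ ⊕ ⋯ ⊕ H_k` with small kernel (the `Hᵢ` may be realized as
quotients `M⧸Lᵢ` and `φ` as the canonical map). -/
theorem stmt13 (S : Type*) [Ring S] (Mod : Type*) [AddCommGroup Mod] [Module S Mod] :
    corank S Mod < ⊤ ↔
      ∃ (k : ℕ) (L : Fin k → Submodule S Mod),
        (∀ i, IsHollowMod S (Mod ⧸ L i)) ∧
        Function.Surjective
          (LinearMap.pi (fun i => (L i).mkQ) : Mod →ₗ[S] ∀ i, Mod ⧸ L i) ∧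
        IsSmallSub S Mod
          (LinearMap.ker (LinearMap.pi (fun i => (L i).mkQ) : Mod →ₗ[S] ∀ i, Mod ⧸ L i)) := by
  classical
  simp only [corank_lt_top_iff, Submodule.isHollowMod_quotient_iff,
    Submodule.surjective_pi_mkQ_iff, Submodule.ker_pi_mkQ,
    Submodule.isSmallSub_iff_isSmallOver_bot]
  constructor
  · intro hbdd
    obtain ⟨t, ht, hhollow, hsmall⟩ := exists_isCoindependent_isHollowOver_isSmallOver hbdd
    obtain ⟨k, f, rfl⟩ := t.exists_fin_embedding_map_univ_eq
    exact ⟨k, f, fun i => hhollow _ (Finset.mem_map_of_mem f (mem_univ i)),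
      supIndep_map.1 ht.2, by rwa [inf_map] at hsmall⟩
  · rintro ⟨k, L, hhollow, hL, hsmall⟩
    have hs : IsCoindependent ((univ.image L).erase ⊤) :=
      ⟨notMem_erase _ _, hL.image.subset (erase_subset _ _)⟩
    refine ⟨_, fun n ⟨t, ht, hn⟩ => hn ▸ hs.card_le ?_ ?_ ht⟩
    · intro a ha
      obtain ⟨i, -, rfl⟩ := mem_image.1 (mem_of_mem_erase ha)
      exact hhollow i
    · rwa [inf_erase_top, inf_image]
end

section
/- Let A = R(x;σ,δ) with σ an automorphism and δ a locally nilpotent σ-derivation. If M is a simple right R-module and Q is an A-submodule of the inverse polynomial module M[x⁻¹] containing elements of arbitrarily negative degree, then Q = M[x⁻¹]. In particular, if M is simple then M[x⁻¹] is a hollow A-module. -/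
open MulOpposite Finsupp

/-! Shifting by a power of `x` moves the coefficient of highest index of any element of `Q` to
index exactly `k`; subtracting the lower terms, which lie in `Q` by induction on `k`, leaves
`m₀x^{-k} ∈ Q` with `m₀ ≠ 0`. Since `m₀x^{-k}·r` equals `m₀σ^{-k}(r)x^{-k}` plus lower terms and
`M` is simple, every `mx^{-k}` lies in `Q`. For hollowness, if `N + L = M[x⁻¹]` then one of `N`,
`L` has elements of arbitrarily negative degree. -/

theorem fWord_eq_zero_of_lt {R : Type*} [Ring R] {σ' δ' : R → R} (hσ' : σ' 0 = 0)
    (hδ' : δ' 0 = 0) {k i : ℕ} (h : k < i) (r : R) : fWord σ' δ' k i r = 0 := by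
  induction k generalizing i with
  | zero => obtain ⟨i, rfl⟩ := Nat.exists_eq_add_of_lt h; rfl
  | succ k ih =>
    obtain ⟨i, rfl⟩ := Nat.exists_eq_succ_of_ne_zero (Nat.ne_zero_of_lt h)
    change σ' (fWord σ' δ' k i r) + δ' (fWord σ' δ' k (i + 1) r) = 0
    rw [ih (by omega), ih (by omega), hσ', hδ', add_zero]

theorem fWord_self {R : Type*} [Ring R] {σ' δ' : R → R} (hσ' : σ' 0 = 0) (hδ' : δ' 0 = 0)
    (k : ℕ) (r : R) : fWord σ' δ' k k r = σ'^[k] r := by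
  induction k with
  | zero => rfl
  | succ k ih =>
    change σ' (fWord σ' δ' k k r) + δ' (fWord σ' δ' k (k + 1) r) = σ'^[k + 1] r
    rw [ih, fWord_eq_zero_of_lt hσ' hδ' k.lt_succ_self, hδ', add_zero,
      Function.iterate_succ_apply']

theorem SkewOreRing.deriv_zero {R A : Type*} [Ring R] [Ring A] {σ : R ≃+* R} {δ : R → R}
    (S : SkewOreRing R A σ δ) : δ 0 = 0 := by
  simpa using S.deriv_add 0 0

section InversePolynomials

variable {B M : Type*} [Semiring B] [AddCommMonoid M] [Module B (ℕ →₀ M)]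

-- Elements of arbitrarily negative degree: the index `j` stands for `x^{-j}`.
def HasUnboundedDegree (Q : Submodule B (ℕ →₀ M)) : Prop :=
  ∀ k : ℕ, ∃ p ∈ Q, ∃ j : ℕ, k ≤ j ∧ p j ≠ 0

theorem Submodule.mem_of_forall_single_mem {Q : Submodule B (ℕ →₀ M)} {p : ℕ →₀ M}
    (h : ∀ t, single t (p t) ∈ Q) : p ∈ Q :=
  p.sum_single ▸ Q.sum_mem fun t _ => h t

theorem hasUnboundedDegree_or_of_sup_eq_top [Nontrivial M] {N L : Submodule B (ℕ →₀ M)}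
    (h : N ⊔ L = ⊤) : HasUnboundedDegree N ∨ HasUnboundedDegree L := by
  unfold HasUnboundedDegree
  by_contra! hNL
  obtain ⟨⟨kN, hN⟩, ⟨kL, hL⟩⟩ := hNL
  obtain ⟨m, hm⟩ := exists_ne (0 : M)
  obtain ⟨n, hn, l, hl, hnl⟩ :=
    Submodule.mem_sup.1 (h ▸ Submodule.mem_top : single (max kN kL) m ∈ N ⊔ L)
  have := congr($hnl (max kN kL))
  simp only [Finsupp.add_apply, single_eq_same, hN n hn _ (le_max_left _ _),
    hL l hl _ (le_max_right _ _), add_zero] at this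
  exact hm this.symm

end InversePolynomials

namespace IsInvPolyModule

variable {R A : Type*} [Ring R] [Ring A] {σ : R ≃+* R} {δ : R → R}
  {S : SkewOreRing R A σ δ} {M : Type*} [AddCommGroup M] [Module Rᵐᵒᵖ M]
  [Module Aᵐᵒᵖ (ℕ →₀ M)]

theorem x_smul_apply (hinv : IsInvPolyModule S M) (p : ℕ →₀ M) (t : ℕ) :
    (op S.x • p) t = p (t + 1) := by
  induction p using Finsupp.induction with
  | zero => simp
  | single_add a b f _ _ ih =>
    rw [smul_add, Finsupp.add_apply, Finsupp.add_apply, ih]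
    cases a with
    | zero => simp [hinv.smul_x_zero]
    | succ a => simp [hinv.smul_x_succ, single_apply]

theorem x_pow_smul_apply (hinv : IsInvPolyModule S M) (n : ℕ) (p : ℕ →₀ M) (t : ℕ) :
    (op S.x ^ n • p) t = p (t + n) := by
  induction n generalizing p t with
  | zero => simp
  | succ n ih => rw [pow_succ, mul_smul, ih, hinv.x_smul_apply, Nat.add_assoc]

theorem exists_mem_apply_ne_zero_of_hasUnboundedDegree (hinv : IsInvPolyModule S M)
    {Q : Submodule Aᵐᵒᵖ (ℕ →₀ M)} (hQ : HasUnboundedDegree Q) (k : ℕ) :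
    ∃ q ∈ Q, q k ≠ 0 ∧ ∀ t, k < t → q t = 0 := by
  obtain ⟨p, hp, j, hkj, hpj⟩ := hQ k
  have hj : j ∈ p.support := mem_support_iff.2 hpj
  set J := p.support.max' ⟨j, hj⟩
  have hkJ : k ≤ J := hkj.trans (p.support.le_max' j hj)
  refine ⟨op S.x ^ (J - k) • p, Q.smul_mem _ hp, ?_, fun t ht => ?_⟩
  · rw [hinv.x_pow_smul_apply, Nat.add_sub_cancel' hkJ]
    exact mem_support_iff.1 (p.support.max'_mem _)
  · rw [hinv.x_pow_smul_apply, ← notMem_support_iff]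
    intro ht'
    have := p.support.le_max' _ ht'
    omega

theorem single_mem_of_single_mem (hinv : IsInvPolyModule S M)
    [IsSimpleModule Rᵐᵒᵖ M] {Q : Submodule Aᵐᵒᵖ (ℕ →₀ M)} {k : ℕ}
    (hlow : ∀ t < k, ∀ m, single t m ∈ Q) {m₀ : M} (hm₀ : m₀ ≠ 0) (hk : single k m₀ ∈ Q)
    (m : M) : single k m ∈ Q := by
  obtain ⟨r, rfl⟩ : ∃ r : R, op r • m₀ = m := by
    have : m ∈ Submodule.span Rᵐᵒᵖ {m₀} :=
      (IsSimpleModule.span_singleton_eq_top Rᵐᵒᵖ hm₀).symm ▸ Submodule.mem_top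
    obtain ⟨r, rfl⟩ := Submodule.mem_span_singleton.1 this
    exact ⟨r.unop, rfl⟩
  -- the leading coefficient of `m₀x^{-k}·σᵏ(r)` is `m₀·r`
  have hlead := hinv.smul_coeff k m₀ (σ^[k] r)
  rw [Finset.sum_range_succ, fWord_self (map_zero σ.symm) (by simp [S.deriv_zero]),
    (Function.LeftInverse.iterate σ.symm_apply_apply k) r, ← sub_eq_iff_eq_add'] at hlead
  rw [← hlead]
  exact Q.sub_mem (Q.smul_mem _ hk)
    (Q.sum_mem fun i hi => hlow i (Finset.mem_range.1 hi) _)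

theorem eq_top_of_hasUnboundedDegree (hinv : IsInvPolyModule S M)
    [IsSimpleModule Rᵐᵒᵖ M] {Q : Submodule Aᵐᵒᵖ (ℕ →₀ M)}
    (hQ : HasUnboundedDegree Q) : Q = ⊤ := by
  have hsingle : ∀ k m, single k m ∈ Q := by
    intro k
    induction k using Nat.strong_induction_on with
    | _ k ih =>
      obtain ⟨q, hq, hqk, hq_gt⟩ := hinv.exists_mem_apply_ne_zero_of_hasUnboundedDegree hQ k
      have hlower : q - single k (q k) ∈ Q := by
        refine Submodule.mem_of_forall_single_mem fun t => ?_
        rcases lt_or_ge t k with ht | ht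
        · exact ih t ht _
        · rcases ht.eq_or_lt with rfl | ht
          · simp
          · simp [hq_gt t ht, single_eq_of_ne ht.ne']
      have hlead : single k (q k) ∈ Q := by simpa using Q.sub_mem hq hlower
      exact hinv.single_mem_of_single_mem ih hqk hlead
  exact eq_top_iff.2 fun p _ => Submodule.mem_of_forall_single_mem fun t => hsingle t (p t)

end IsInvPolyModule

/-- If `M` is a simple right `R`-module and `Q` is an `A`-submodule of
`M[x⁻¹]` containing inverse polynomials of arbitrarily negative degree, then
`Q = M[x⁻¹]`; in particular `M[x⁻¹]` is a hollow `A`-module. -/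
theorem stmt15 (R A : Type*) [Ring R] [Ring A] (σ : R ≃+* R) (δ : R → R)
    (S : SkewOreRing R A σ δ) (M : Type*) [AddCommGroup M] [Module Rᵐᵒᵖ M]
    [Module Aᵐᵒᵖ (ℕ →₀ M)] (hinv : IsInvPolyModule S M)
    (hsimple : IsSimpleModule Rᵐᵒᵖ M)
    (Q : Submodule Aᵐᵒᵖ (ℕ →₀ M))
    (hQ : ∀ k : ℕ, ∃ p ∈ Q, ∃ j : ℕ, k ≤ j ∧ p j ≠ 0) :
    Q = ⊤ ∧ IsHollowMod Aᵐᵒᵖ (ℕ →₀ M) := by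
  have := IsSimpleModule.nontrivial Rᵐᵒᵖ M
  refine ⟨hinv.eq_top_of_hasUnboundedDegree hQ, fun N hN L hNL => ?_⟩
  rcases hasUnboundedDegree_or_of_sup_eq_top hNL with hN' | hL
  · exact absurd (hinv.eq_top_of_hasUnboundedDegree hN') hN
  · exact hinv.eq_top_of_hasUnboundedDegree hL
end

section
/- Let Q(0,b,c) be the algebra over a field 𝕜 of characteristic zero generated by x and y with relation yx = bxy + cy² where b ≠ 0. Then σ(x) := bx extends to an automorphism σ of 𝕜[x], δ(x) := c extends to a σ-derivation δ of 𝕜[x] that is locally nilpotent, and Q(0,b,c) is isomorphic to the skew Ore polynomial ring 𝕜[x](y;σ,δ) with commutation rule yp = σ(p)y + yδ(p)y for p ∈ 𝕜[x]. -/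
/-!
In any algebra with `y x = b x y + c y²`, induction on `p` gives `y p = σ(p) y + y δ(p) y`
(the induction step rests on `c (σ p - p) = (b - 1) X δ p`); iterating it and using that `δ`
lowers degrees yields the skew Ore commutation rule, so the monomials `p y^k` span `Q(0,b,c)`.
They are independent because `Q(0,b,c)` acts on the right on the free `𝕜[X]`-module with basis
`e_k` (standing for `y^k`): `y` shifts `e_k ↦ e_{k+1}` and `x` acts through
`y^k x = b^k x y^k + c (1 + b + ⋯ + b^(k-1)) y^(k+1)`, so `e_0 · ∑ p_k y^k` recovers the `p_k`.
-/

open MulOpposite Polynomial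

/-- The defining relation `y·x = b·x·y + c·y²` of the algebra `Q(0,b,c)` of
Golovashkin–Maksimov, on the free algebra on the two generators `x = ι 0`,
`y = ι 1`. -/
def qRel (𝕜 : Type*) [Field 𝕜] (b c : 𝕜) :
    FreeAlgebra 𝕜 (Fin 2) → FreeAlgebra 𝕜 (Fin 2) → Prop :=
  fun p q => p = FreeAlgebra.ι 𝕜 1 * FreeAlgebra.ι 𝕜 0 ∧
    q = algebraMap 𝕜 _ b * (FreeAlgebra.ι 𝕜 0 * FreeAlgebra.ι 𝕜 1) +
        algebraMap 𝕜 _ c * (FreeAlgebra.ι 𝕜 1 * FreeAlgebra.ι 𝕜 1)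

section TwistedDeriv

variable {R : Type*} [CommRing R] (b c : R)

noncomputable abbrev twistMatrix : Matrix (Fin 2) (Fin 2) R[X] := !![C b * X, C c; 0, X]

/-- `aeval (twistMatrix b c) p = !![σ p, δ p; 0, p]` (`aeval_twistMatrix`), so the σ-Leibniz
rule for the corner entry `δ` is the multiplicativity of `aeval`. -/
noncomputable def twistedDeriv : R[X] →ₗ[R] R[X] where
  toFun p := aeval (twistMatrix b c) p 0 1
  map_add' p q := by simp
  map_smul' a p := by simp

lemma aeval_twistMatrix (p : R[X]) :
    aeval (twistMatrix b c) p = !![aeval (C b * X) p, twistedDeriv b c p; 0, p] := by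
  have h : aeval (twistMatrix b c) p 0 0 = aeval (C b * X) p ∧
      aeval (twistMatrix b c) p 1 0 = 0 ∧ aeval (twistMatrix b c) p 1 1 = p := by
    induction p using Polynomial.induction_on with
    | C a => simp [Matrix.algebraMap_matrix_apply]
    | add p q hp hq => simp [hp, hq]
    | monomial n a ih =>
      rw [pow_succ, ← mul_assoc]
      generalize C a * X ^ n = p at ih ⊢
      simp [Matrix.mul_apply, Fin.sum_univ_two, ih]
  ext i j
  fin_cases i <;> fin_cases j <;> simp [h, twistedDeriv]

lemma twistedDeriv_mul (p q : R[X]) :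
    twistedDeriv b c (p * q) = aeval (C b * X) p * twistedDeriv b c q + twistedDeriv b c p * q := by
  have h := congrArg (· 0 1) (aeval_twistMatrix b c (p * q))
  simp only [map_mul, aeval_twistMatrix, Matrix.mul_fin_two] at h
  simpa using h.symm

@[simp] lemma twistedDeriv_X : twistedDeriv b c X = C c := by
  simp [twistedDeriv]

@[simp] lemma twistedDeriv_C (a : R) : twistedDeriv b c (C a) = 0 := by
  simp [twistedDeriv, Matrix.algebraMap_matrix_apply]

lemma twistedDeriv_X_mul (p : R[X]) :
    twistedDeriv b c (X * p) = C b * X * twistedDeriv b c p + C c * p := by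
  simp [twistedDeriv_mul]

lemma twistedDeriv_X_pow_succ (n : ℕ) :
    twistedDeriv b c (X ^ (n + 1)) = C (c * ∑ i ∈ Finset.range (n + 1), b ^ i) * X ^ n := by
  induction n with
  | zero => simp
  | succ n ih =>
    rw [pow_succ', twistedDeriv_X_mul, ih, geom_sum_succ (n := n + 1)]
    simp only [C_mul, C_add, C_1]
    ring

lemma twistedDeriv_iterate_X_pow (n : ℕ) : (twistedDeriv b c)^[n + 1] (X ^ n) = 0 := by
  induction n with
  | zero => simpa using twistedDeriv_C b c 1
  | succ n ih =>
    rw [Function.iterate_succ_apply, twistedDeriv_X_pow_succ, ← smul_eq_C_mul,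
      ← Module.End.coe_pow, map_smul, Module.End.coe_pow, ih, smul_zero]

lemma twistedDeriv_locallyNilpotent (p : R[X]) : ∃ n, (twistedDeriv b c)^[n] p = 0 := by
  suffices p ∈ Module.End.maxGenEigenspace (twistedDeriv b c) 0 by
    simpa [← Module.End.coe_pow] using this
  induction p using Polynomial.induction_on' with
  | add p q hp hq => exact add_mem hp hq
  | monomial n a =>
    rw [← C_mul_X_pow_eq_monomial, ← smul_eq_C_mul]
    refine Submodule.smul_mem _ _ ((Module.End.mem_maxGenEigenspace _ _ _).2 ⟨n + 1, ?_⟩)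
    simpa [Module.End.coe_pow] using twistedDeriv_iterate_X_pow b c n

lemma C_mul_aeval_sub (p : R[X]) :
    C c * (aeval (C b * X) p - p) = (C b - 1) * (X * twistedDeriv b c p) := by
  induction p using Polynomial.induction_on with
  | C a => simp
  | add p q hp hq => simp only [map_add]; linear_combination hp + hq
  | monomial n a ih =>
    rw [pow_succ', mul_left_comm]
    generalize C a * X ^ n = p at ih ⊢
    rw [twistedDeriv_X_mul, map_mul, aeval_X]
    linear_combination C b * X * ih

end TwistedDeriv

section SkewRelation

variable {R A : Type*} [CommRing R] [Ring A] [Algebra R A] {b c : R} {x y : A}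

lemma mul_aeval_of_skew_rel (hyx : y * x = b • (x * y) + c • (y * y)) (r : R[X]) :
    y * aeval x r =
      aeval x (aeval (C b * X) r) * y + y * aeval x (twistedDeriv b c r) * y := by
  have hyx' (w : A) : y * (x * w) = b • (x * (y * w)) + c • (y * (y * w)) := by
    rw [← mul_assoc, hyx, add_mul, smul_mul_assoc, smul_mul_assoc, mul_assoc, mul_assoc]
  induction r using Polynomial.induction_on with
  | C a => simp [Algebra.commutes]
  | add p q hp hq => simp only [map_add, mul_add, add_mul, hp, hq]; abel
  | monomial n a ih =>
    rw [pow_succ', mul_left_comm]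
    generalize C a * X ^ n = r at ih ⊢
    have key : c • (y * aeval x (aeval (C b * X) r) * y) - c • (y * aeval x r * y) =
        (b - 1) • (y * (x * (aeval x (twistedDeriv b c r) * y))) := by
      have h := congrArg (fun q => y * aeval x q * y) (C_mul_aeval_sub b c r)
      simpa only [map_mul, map_sub, aeval_C, aeval_X, map_one, Algebra.algebraMap_eq_smul_one,
        smul_mul_assoc, one_mul, sub_mul, mul_sub, mul_smul_comm, mul_assoc, sub_smul,
        one_smul] using h
    calc y * aeval x (X * r)
        = b • (x * (y * aeval x r)) + c • (y * (y * aeval x r)) := by rw [map_mul, aeval_X, hyx']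
      _ = aeval x (aeval (C b * X) (X * r)) * y + y * aeval x (twistedDeriv b c (X * r)) * y := by
        simp only [ih, twistedDeriv_X_mul, map_mul, map_add, aeval_C, aeval_X,
          Algebra.algebraMap_eq_smul_one, smul_mul_assoc, one_mul, mul_assoc, mul_add, add_mul,
          mul_smul_comm, smul_add, hyx'] at key ⊢
        linear_combination (norm := module) key

lemma mul_aeval_eq_sum_of_skew_rel (hyx : y * x = b • (x * y) + c • (y * y)) {n : ℕ} {r : R[X]}
    (hr : (twistedDeriv b c)^[n] r = 0) :
    y * aeval x r = ∑ i ∈ Finset.range n,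
      aeval x (aeval (C b * X) ((twistedDeriv b c)^[i] r)) * y ^ (i + 1) := by
  induction n generalizing r with
  | zero => simp_all
  | succ n ih =>
    rw [mul_aeval_of_skew_rel hyx, ih hr, Finset.sum_range_succ', Finset.sum_mul, add_comm]
    simp [pow_succ, mul_assoc]

end SkewRelation

namespace QAlgebra

open Finsupp

variable {𝕜 : Type*} [Field 𝕜] (b c : 𝕜)

noncomputable abbrev x : RingQuot (qRel 𝕜 b c) := RingQuot.mkAlgHom 𝕜 _ (FreeAlgebra.ι 𝕜 0)

noncomputable abbrev y : RingQuot (qRel 𝕜 b c) := RingQuot.mkAlgHom 𝕜 _ (FreeAlgebra.ι 𝕜 1)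

lemma y_mul_x : y b c * x b c = b • (x b c * y b c) + c • (y b c * y b c) := by
  have h := RingQuot.mkAlgHom_rel 𝕜 (show qRel 𝕜 b c _ _ from ⟨rfl, rfl⟩)
  rw [Algebra.smul_def, Algebra.smul_def]
  simpa only [map_add, map_mul, AlgHom.commutes] using h

/-- `single k p` stands for `p y^k`. -/
noncomputable def rightMulX : Module.End 𝕜 (ℕ →₀ 𝕜[X]) :=
  lsum 𝕜 fun k => b ^ k • (lsingle k ∘ₗ LinearMap.mulLeft 𝕜 X) +
    (c * ∑ i ∈ Finset.range k, b ^ i) • lsingle (k + 1)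

noncomputable def rightMulY : Module.End 𝕜 (ℕ →₀ 𝕜[X]) :=
  lsum 𝕜 fun k => lsingle (k + 1)

lemma rightMulX_single (k : ℕ) (p : 𝕜[X]) :
    rightMulX b c (single k p) =
      b ^ k • single k (X * p) + (c * ∑ i ∈ Finset.range k, b ^ i) • single (k + 1) p := by
  simp [rightMulX]

lemma rightMulY_single (k : ℕ) (p : 𝕜[X]) : rightMulY (single k p) = single (k + 1) p := by
  simp [rightMulY]

lemma rightMulX_mul_rightMulY :
    rightMulX b c * rightMulY = b • (rightMulY * rightMulX b c) + c • (rightMulY * rightMulY) := by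
  refine lhom_ext fun k p => ?_
  simp only [Module.End.mul_apply, LinearMap.add_apply, LinearMap.smul_apply, rightMulY_single,
    rightMulX_single, map_add, map_smul, geom_sum_succ, pow_succ']
  module

noncomputable def rightRep : RingQuot (qRel 𝕜 b c) →ₐ[𝕜] (Module.End 𝕜 (ℕ →₀ 𝕜[X]))ᵐᵒᵖ :=
  RingQuot.liftAlgHom 𝕜 ⟨FreeAlgebra.lift 𝕜 ![op (rightMulX b c), op rightMulY], by
    rintro _ _ ⟨rfl, rfl⟩
    simp [← op_mul, ← op_add, Algebra.smul_def, Algebra.commutes, rightMulX_mul_rightMulY]⟩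

lemma rightRep_x : rightRep b c (x b c) = op (rightMulX b c) := by
  simp [rightRep]

lemma rightRep_y : rightRep b c (y b c) = op rightMulY := by
  simp [rightRep]

lemma aeval_rightMulX_single_zero (r p : 𝕜[X]) :
    aeval (rightMulX b c) r (single 0 p) = single 0 (r * p) := by
  induction r using Polynomial.induction_on with
  | C a => simp [smul_single, smul_eq_C_mul]
  | add r s hr hs => simp [hr, hs, add_mul]
  | monomial n a ih =>
    rw [pow_succ', mul_left_comm, map_mul, aeval_X, Module.End.mul_apply, ih, rightMulX_single]
    simp [mul_assoc]

lemma rightMulY_pow_single_zero (k : ℕ) (p : 𝕜[X]) :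
    (rightMulY ^ k) (single 0 p) = single k p := by
  induction k with
  | zero => simp
  | succ k ih => rw [pow_succ', Module.End.mul_apply, ih, rightMulY_single]

noncomputable def toQ : (ℕ →₀ 𝕜[X]) →ₗ[𝕜] RingQuot (qRel 𝕜 b c) :=
  lsum 𝕜 fun k => LinearMap.mulRight 𝕜 (y b c ^ k) ∘ₗ (aeval (x b c)).toLinearMap

lemma toQ_single (k : ℕ) (r : 𝕜[X]) : toQ b c (single k r) = aeval (x b c) r * y b c ^ k := by
  simp [toQ]

lemma unop_rightRep_toQ (f : ℕ →₀ 𝕜[X]) : (rightRep b c (toQ b c f)).unop (single 0 1) = f := by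
  induction f using Finsupp.induction_linear with
  | zero => simp
  | add f g hf hg => simp [hf, hg]
  | single k r =>
    rw [toQ_single, map_mul, map_pow, ← aeval_algHom_apply, rightRep_x, rightRep_y, aeval_op_apply,
      ← op_pow, ← op_mul, unop_op, Module.End.mul_apply, aeval_rightMulX_single_zero, mul_one,
      rightMulY_pow_single_zero]

lemma toQ_injective : Function.Injective (toQ b c) :=
  Function.LeftInverse.injective (g := fun q => (rightRep b c q).unop (single 0 1))
    (unop_rightRep_toQ b c)

lemma mul_mem_range_toQ_of_single {q : RingQuot (qRel 𝕜 b c)}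
    (hq : ∀ k r, q * toQ b c (single k r) ∈ LinearMap.range (toQ b c))
    {m : RingQuot (qRel 𝕜 b c)} (hm : m ∈ LinearMap.range (toQ b c)) :
    q * m ∈ LinearMap.range (toQ b c) := by
  obtain ⟨f, rfl⟩ := hm
  induction f using Finsupp.induction_linear with
  | zero => simp
  | add f g hf hg => simpa [mul_add] using add_mem hf hg
  | single k r => exact hq k r

lemma x_mul_mem_range_toQ {m : RingQuot (qRel 𝕜 b c)} (hm : m ∈ LinearMap.range (toQ b c)) :
    x b c * m ∈ LinearMap.range (toQ b c) := by
  refine mul_mem_range_toQ_of_single b c (fun k r => ⟨single k (X * r), ?_⟩) hm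
  rw [toQ_single, toQ_single, map_mul, aeval_X, mul_assoc]

lemma y_mul_mem_range_toQ {m : RingQuot (qRel 𝕜 b c)} (hm : m ∈ LinearMap.range (toQ b c)) :
    y b c * m ∈ LinearMap.range (toQ b c) := by
  refine mul_mem_range_toQ_of_single b c (fun k r => ?_) hm
  obtain ⟨n, hn⟩ := twistedDeriv_locallyNilpotent b c r
  rw [toQ_single, ← mul_assoc, mul_aeval_eq_sum_of_skew_rel (y_mul_x b c) hn, Finset.sum_mul]
  refine Submodule.sum_mem _ fun i _ =>
    ⟨single (i + 1 + k) (aeval (C b * X) ((twistedDeriv b c)^[i] r)), ?_⟩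
  rw [toQ_single, pow_add, mul_assoc]

lemma mul_mem_range_toQ (q : RingQuot (qRel 𝕜 b c)) {m : RingQuot (qRel 𝕜 b c)}
    (hm : m ∈ LinearMap.range (toQ b c)) : q * m ∈ LinearMap.range (toQ b c) := by
  obtain ⟨w, rfl⟩ := RingQuot.mkAlgHom_surjective 𝕜 (qRel 𝕜 b c) q
  induction w using FreeAlgebra.induction generalizing m with
  | grade0 a => simpa [Algebra.algebraMap_eq_smul_one] using Submodule.smul_mem _ a hm
  | grade1 i =>
    fin_cases i
    · exact x_mul_mem_range_toQ b c hm
    · exact y_mul_mem_range_toQ b c hm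
  | mul u v hu hv => simpa [mul_assoc] using hu (hv hm)
  | add u v hu hv => simpa [add_mul] using add_mem (hu hm) (hv hm)

lemma toQ_surjective : Function.Surjective (toQ b c) := fun q => by
  have h1 : (1 : RingQuot (qRel 𝕜 b c)) ∈ LinearMap.range (toQ b c) :=
    ⟨single 0 1, by simp [toQ_single]⟩
  simpa using mul_mem_range_toQ b c q h1

end QAlgebra

open QAlgebra in
theorem stmt19_general (𝕜 : Type*) [Field 𝕜] (b c : 𝕜) (hb : b ≠ 0) :
    ∃ (σ : Polynomial 𝕜 ≃ₐ[𝕜] Polynomial 𝕜) (δ : Polynomial 𝕜 → Polynomial 𝕜),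
      σ X = C b * X ∧ δ X = C c ∧
      (∀ p q : Polynomial 𝕜, δ (p + q) = δ p + δ q) ∧
      (∀ p q : Polynomial 𝕜, δ (p * q) = σ p * δ q + δ p * q) ∧
      (∀ p : Polynomial 𝕜, ∃ n : ℕ, δ^[n] p = 0) ∧
      ∃ S : SkewOreRing (Polynomial 𝕜) (RingQuot (qRel 𝕜 b c)) σ.toRingEquiv δ,
        (∀ a : 𝕜, S.φ (C a) = algebraMap 𝕜 (RingQuot (qRel 𝕜 b c)) a) ∧
        S.φ X = RingQuot.mkRingHom (qRel 𝕜 b c) (FreeAlgebra.ι 𝕜 0) ∧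
        S.x = RingQuot.mkRingHom (qRel 𝕜 b c) (FreeAlgebra.ι 𝕜 1) := by
  let σ : 𝕜[X] ≃ₐ[𝕜] 𝕜[X] := algEquivOfCompEqX (C b * X) (C b⁻¹ * X)
    (by simp [← mul_assoc, ← C_mul, hb]) (by simp [← mul_assoc, ← C_mul, hb])
  have locNilp (r : 𝕜[X]) : ∃ n, 1 ≤ n ∧ (twistedDeriv b c)^[n] r = 0 := by
    obtain ⟨n, hn⟩ := twistedDeriv_locallyNilpotent b c r
    exact ⟨n + 1, by omega, by rw [Function.iterate_succ_apply', hn, map_zero]⟩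
  have hmk (w : FreeAlgebra 𝕜 (Fin 2)) :
      RingQuot.mkAlgHom 𝕜 (qRel 𝕜 b c) w = RingQuot.mkRingHom (qRel 𝕜 b c) w :=
    DFunLike.congr_fun (RingQuot.mkAlgHom_coe 𝕜 (qRel 𝕜 b c)) w
  refine ⟨σ, twistedDeriv b c, aeval_X _, twistedDeriv_X b c, map_add _, twistedDeriv_mul b c,
    twistedDeriv_locallyNilpotent b c, ?_⟩
  refine ⟨⟨(aeval (x b c)).toRingHom, y b c, map_add _, twistedDeriv_mul b c, locNilp,
    ⟨toQ_injective b c, toQ_surjective b c⟩,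
    fun r n hn => mul_aeval_eq_sum_of_skew_rel (y_mul_x b c) hn⟩,
    fun a => aeval_C _ a, (aeval_X _).trans (hmk _), hmk _⟩

/-- `Q(0,b,c)` with `b ≠ 0` over a field of characteristic zero: `σ(x) = b x`
extends to an automorphism of `𝕜[x]`, `δ(x) = c` extends to a locally
nilpotent `σ`-derivation, and `Q(0,b,c)` is (isomorphic to) the skew Ore
polynomial ring `𝕜[x](y;σ,δ)`, via `x ↦ ι 0` and `y ↦ ι 1`. -/
theorem stmt19 (𝕜 : Type*) [Field 𝕜] [CharZero 𝕜] (b c : 𝕜) (hb : b ≠ 0) :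
    ∃ (σ : Polynomial 𝕜 ≃ₐ[𝕜] Polynomial 𝕜) (δ : Polynomial 𝕜 → Polynomial 𝕜),
      σ X = C b * X ∧ δ X = C c ∧
      (∀ p q : Polynomial 𝕜, δ (p + q) = δ p + δ q) ∧
      (∀ p q : Polynomial 𝕜, δ (p * q) = σ p * δ q + δ p * q) ∧
      (∀ p : Polynomial 𝕜, ∃ n : ℕ, δ^[n] p = 0) ∧
      ∃ S : SkewOreRing (Polynomial 𝕜) (RingQuot (qRel 𝕜 b c)) σ.toRingEquiv δ,
        (∀ a : 𝕜, S.φ (C a) = algebraMap 𝕜 (RingQuot (qRel 𝕜 b c)) a) ∧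
        S.φ X = RingQuot.mkRingHom (qRel 𝕜 b c) (FreeAlgebra.ι 𝕜 0) ∧
        S.x = RingQuot.mkRingHom (qRel 𝕜 b c) (FreeAlgebra.ι 𝕜 1) :=
  stmt19_general 𝕜 b c hb
end
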